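/- arXiv:math/0405444 — 4 statements merged into one kernel-verified Lean document; each statement's English description precedes it below -/
import Mathlib

section
/- Let X be an extensible marked Dynkin diagram (Δ ≠ 0, det(C(X)) ≠ 0, and gcd(Δ, det(C(X))) = 1) and n ≥ d with det(C(X_n)) ≠ 0. Then the weight lattice modulo root lattice P(X_n)/Q(X_n) is a cyclic group of order |det(C(X_n))| generated by the class of the fundamental weight ω_n^{(n)} corresponding to the last node of the tail. -/
/-!
Cofactor expansion along the last row gives `det C(X_{m+2}) = 2 det C(X_{m+1}) - det C(X_m)`
along the tail, so the determinants form an arithmetic progression with difference `Δ`; as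
`Δ` is coprime to `det C(X_d)`, consecutive determinants are coprime. The order of
`P/Q = ℤⁿ / (column span of the Cartan matrix A)` is `|det A|` (Smith normal form). Since
`det B • v` lies in the column span of any square matrix `B` (adjugate), taking for `B` both
`A` and `A` with its last column replaced by `ω_n`, whose determinant is `det C(X_{n-1})`,
shows that `v ∈ Q + ℤ ω_n` for every `v`.
-/

open scoped BigOperators

def Xmat (d : ℕ) (C : Matrix (Fin d) (Fin d) ℤ) (n : ℕ) : Matrix (Fin n) (Fin n) ℤ :=
  Matrix.of fun i j =>
    if h : (i : ℕ) < d ∧ (j : ℕ) < d then C ⟨i, h.1⟩ ⟨j, h.2⟩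
    else if (i : ℕ) = (j : ℕ) then 2
    else if (i : ℕ) + 1 = (j : ℕ) ∨ (j : ℕ) + 1 = (i : ℕ) then -1
    else 0

def detX (d : ℕ) (C : Matrix (Fin d) (Fin d) ℤ) (n : ℕ) : ℤ := (Xmat d C n).det

def Δdiff (d : ℕ) (C : Matrix (Fin d) (Fin d) ℤ) : ℤ := detX d C d - detX d C (d - 1)

def Extensible (d : ℕ) (C : Matrix (Fin d) (Fin d) ℤ) : Prop :=
  Δdiff d C ≠ 0 ∧ detX d C d ≠ 0 ∧ IsCoprime (Δdiff d C) (detX d C d)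

def fw (n : ℕ) (i : Fin n) : Fin n → ℤ := Pi.single i 1

def col (d : ℕ) (C : Matrix (Fin d) (Fin d) ℤ) (n : ℕ) (j : Fin n) : Fin n → ℤ :=
  fun i => Xmat d C n i j

def Qlat (d : ℕ) (C : Matrix (Fin d) (Fin d) ℤ) (n : ℕ) : Submodule ℤ (Fin n → ℤ) :=
  Submodule.span ℤ (Set.range (col d C n))

def lastFin (n : ℕ) (h : 0 < n) : Fin n := ⟨n - 1, by omega⟩

def ASeq (d : ℕ) (C : Matrix (Fin d) (Fin d) ℤ) (a : ℕ → ℤ) : Prop :=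
  ∀ n, d ≤ n → detX d C n ≠ 0 → ∀ i : Fin n,
    (-(Δdiff d C)) • fw n i - a (i : ℕ) • fw n (lastFin n i.pos) ∈ Qlat d C n

namespace Matrix

variable {ι : Type*} [Fintype ι] [DecidableEq ι]

theorem natCard_quotient_range_mulVecLin (A : Matrix ι ι ℤ) (hA : A.det ≠ 0) :
    Nat.card ((ι → ℤ) ⧸ LinearMap.range A.mulVecLin) = A.det.natAbs := by
  have hinj : Function.Injective A.mulVecLin :=
    isLeftRegular_iff_mulVec_injective.mp
      (isRegular_of_isLeftRegular_det (IsLeftCancelMulZero.mul_left_cancel_of_ne_zero hA)).left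
  rw [← Submodule.natAbs_det_equiv _ (LinearEquiv.ofInjective _ hinj), ← LinearMap.det_toLin']
  rfl

variable {R : Type*} [CommRing R]

theorem det_smul_mem_range_mulVecLin (A : Matrix ι ι R) (v : ι → R) :
    A.det • v ∈ LinearMap.range A.mulVecLin :=
  ⟨A.adjugate *ᵥ v, by
    rw [mulVecLin_apply, mulVec_mulVec, mul_adjugate, smul_mulVec, one_mulVec]⟩

theorem range_mulVecLin_sup_span_singleton_eq_top (A : Matrix ι ι R) (j : ι) (w : ι → R)
    (h : IsCoprime (A.updateCol j w).det A.det) :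
    LinearMap.range A.mulVecLin ⊔ Submodule.span R {w} = ⊤ := by
  set L := LinearMap.range A.mulVecLin ⊔ Submodule.span R {w}
  have hA : LinearMap.range A.mulVecLin ≤ L := le_sup_left
  have hAw : LinearMap.range (A.updateCol j w).mulVecLin ≤ L := by
    rw [range_mulVecLin, Submodule.span_le]
    rintro _ ⟨k, rfl⟩
    by_cases hk : k = j
    · subst hk
      have : (A.updateCol k w).col k = w := funext fun i => updateCol_self
      rw [this]
      exact Submodule.mem_sup_right (Submodule.mem_span_singleton_self w)
    · have : (A.updateCol j w).col k = A.col k := funext fun i => updateCol_ne hk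
      rw [this]
      exact hA (range_mulVecLin A ▸ Submodule.subset_span ⟨k, rfl⟩)
  obtain ⟨a, b, hab⟩ := h
  refine eq_top_iff.mpr fun v _ => ?_
  have hv : v = a • ((A.updateCol j w).det • v) + b • (A.det • v) := by
    rw [smul_smul, smul_smul, ← add_smul, hab, one_smul]
  rw [hv]
  exact L.add_mem (L.smul_mem a (hAw (det_smul_mem_range_mulVecLin _ v)))
    (L.smul_mem b (hA (det_smul_mem_range_mulVecLin _ v)))

theorem det_succ_eq_mul_det_submatrix_castSucc {m : ℕ}
    (M : Matrix (Fin (m + 1)) (Fin (m + 1)) R)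
    (h : ∀ i : Fin m, M i.castSucc (Fin.last m) = 0) :
    M.det = M (Fin.last m) (Fin.last m) * (M.submatrix Fin.castSucc Fin.castSucc).det := by
  rw [det_succ_column M (Fin.last m), Fin.sum_univ_castSucc]
  simp [h, Fin.succAbove_last]

end Matrix

namespace Submodule

variable {R M : Type*} [Ring R] [AddCommGroup M] [Module R M]

theorem exists_smul_eq_mk_of_sup_span_singleton_eq_top (p : Submodule R M) (w : M)
    (h : p ⊔ span R {w} = ⊤) (v : M ⧸ p) :
    ∃ k : R, v = k • (Quotient.mk w : M ⧸ p) := by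
  obtain ⟨x, rfl⟩ := Quotient.mk_surjective p v
  obtain ⟨y, hy, z, hz, rfl⟩ := mem_sup.mp (h ▸ mem_top : x ∈ p ⊔ span R {w})
  obtain ⟨k, rfl⟩ := mem_span_singleton.mp hz
  refine ⟨k, ?_⟩
  rw [Quotient.mk_add, (Quotient.mk_eq_zero p).mpr hy, zero_add, Quotient.mk_smul]

end Submodule

variable {d : ℕ} (C : Matrix (Fin d) (Fin d) ℤ)

theorem Xmat_submatrix_castSucc (m : ℕ) :
    (Xmat d C (m + 1)).submatrix Fin.castSucc Fin.castSucc = Xmat d C m := rfl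

theorem Xmat_apply_of_tail {n : ℕ} (i j : Fin n) (h : d ≤ i ∨ d ≤ j) :
    Xmat d C n i j =
      if (i : ℕ) = j then 2 else if (i : ℕ) + 1 = j ∨ (j : ℕ) + 1 = i then -1 else 0 :=
  dif_neg fun h' => by omega

theorem det_Xmat_updateCol_last (m : ℕ) :
    ((Xmat d C (m + 1)).updateCol (Fin.last m) (Pi.single (Fin.last m) 1)).det = detX d C m := by
  have hsub : ((Xmat d C (m + 1)).updateCol (Fin.last m) (Pi.single (Fin.last m) 1)).submatrix
      Fin.castSucc Fin.castSucc = Xmat d C m := by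
    ext i j
    exact Matrix.updateCol_ne (Fin.castSucc_ne_last j)
  rw [Matrix.det_succ_eq_mul_det_submatrix_castSucc _ fun i => ?_, hsub]
  · simp [detX]
  · simp [Fin.castSucc_ne_last]

theorem detX_add_two {m : ℕ} (hm : d ≤ m + 1) :
    detX d C (m + 2) = 2 * detX d C (m + 1) - detX d C m := by
  have htail : d ≤ ((Fin.last (m + 1) : Fin (m + 2)) : ℕ) := by simpa using hm
  have hcol (i : Fin (m + 2)) : Xmat d C (m + 2) i (Fin.last (m + 1)) =
      if (i : ℕ) = m + 1 then 2 else if (i : ℕ) = m then -1 else 0 :=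
    (Xmat_apply_of_tail C _ _ (.inr htail)).trans <| by
      simp only [Fin.val_last]; split_ifs <;> omega
  have hrow (j : Fin (m + 2)) : Xmat d C (m + 2) (Fin.last (m + 1)) j =
      if (j : ℕ) = m + 1 then 2 else if (j : ℕ) = m then -1 else 0 :=
    (Xmat_apply_of_tail C _ _ (.inl htail)).trans <| by
      simp only [Fin.val_last]; split_ifs <;> omega
  have hminor : ((Xmat d C (m + 2)).submatrix Fin.castSucc
      (Fin.last m).castSucc.succAbove).det = -detX d C m := by
    have hsub : ((Xmat d C (m + 2)).submatrix Fin.castSucc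
        (Fin.last m).castSucc.succAbove).submatrix Fin.castSucc Fin.castSucc = Xmat d C m := by
      ext i j
      simp only [Matrix.submatrix_apply, Fin.succAbove_castSucc_of_lt _ _ (Fin.castSucc_lt_last j)]
      rfl
    rw [Matrix.det_succ_eq_mul_det_submatrix_castSucc _ fun i => ?_, hsub]
    · simp [hcol, detX]
    · rw [Matrix.submatrix_apply, Fin.succAbove_castSucc_self, Fin.succ_last, hcol,
        if_neg (by simp only [Fin.val_castSucc]; omega),
        if_neg (by simp only [Fin.val_castSucc]; omega)]
  -- expand along the last row, where only the columns `m` and `m + 1` are nonzero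
  rw [detX, Matrix.det_succ_row _ (Fin.last (m + 1)), Fin.sum_univ_castSucc,
    Fin.sum_univ_castSucc, Fin.succAbove_last, hminor,
    Finset.sum_eq_zero fun k _ => by
      rw [hrow, if_neg (by simp only [Fin.val_castSucc]; omega),
        if_neg (by simp only [Fin.val_castSucc]; omega), mul_zero, zero_mul]]
  simp [hrow, detX, ← Xmat_submatrix_castSucc C (m + 1), sub_eq_neg_add]

theorem detX_sub_detX_pred (hd : 1 ≤ d) {n : ℕ} (hn : d ≤ n) :
    detX d C n - detX d C (n - 1) = Δdiff d C := by
  induction n, hn using Nat.le_induction with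
  | base => rfl
  | succ n hdn ih =>
    obtain ⟨k, rfl⟩ : ∃ k, n = k + 1 := ⟨n - 1, by omega⟩
    rw [Nat.add_sub_cancel, detX_add_two C hdn]
    rw [Nat.add_sub_cancel] at ih
    linarith

theorem detX_add (hd : 1 ≤ d) (k : ℕ) :
    detX d C (d + k) = detX d C d + k * Δdiff d C := by
  induction k with
  | zero => simp
  | succ k ih =>
    have := detX_sub_detX_pred C hd (Nat.le_add_right d (k + 1))
    rw [← add_assoc, Nat.add_sub_cancel] at this
    rw [← add_assoc]
    push_cast
    linarith

theorem isCoprime_Δdiff_detX (hd : 1 ≤ d) (hX : Extensible d C) {n : ℕ} (hn : d ≤ n) :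
    IsCoprime (Δdiff d C) (detX d C n) := by
  obtain ⟨k, rfl⟩ := Nat.exists_eq_add_of_le hn
  rw [detX_add C hd, mul_comm]
  exact hX.2.2.add_mul_left_right k

theorem isCoprime_detX_pred_detX (hd : 1 ≤ d) (hX : Extensible d C) {n : ℕ} (hn : d ≤ n) :
    IsCoprime (detX d C (n - 1)) (detX d C n) := by
  have h : detX d C (n - 1) = -Δdiff d C + detX d C n * 1 := by
    linarith [detX_sub_detX_pred C hd hn]
  rw [h]
  exact (isCoprime_Δdiff_detX C hd hX hn).neg_left.add_mul_left_left 1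

theorem Qlat_eq_range_mulVecLin (n : ℕ) :
    Qlat d C n = LinearMap.range (Xmat d C n).mulVecLin :=
  (Matrix.range_mulVecLin _).symm

/-- Weights are written in fundamental-weight coordinates, so `P(X_n) = ℤⁿ`, the `i`-th
fundamental weight is `fw n i` and `Q(X_n)` is spanned by the columns of the Cartan matrix. -/
theorem tensor_stab_quotient_cyclic (d : ℕ) (hd : 1 ≤ d)
    (C : Matrix (Fin d) (Fin d) ℤ) (hX : Extensible d C)
    (n : ℕ) (hn : d ≤ n) (hdet : detX d C n ≠ 0) :
    Nat.card ((Fin n → ℤ) ⧸ Qlat d C n) = (detX d C n).natAbs ∧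
    ∀ v : (Fin n → ℤ) ⧸ Qlat d C n, ∃ k : ℤ,
      v = k • (Submodule.Quotient.mk (fw n (lastFin n (by omega))) :
        (Fin n → ℤ) ⧸ Qlat d C n) := by
  obtain ⟨m, rfl⟩ : ∃ m, n = m + 1 := ⟨n - 1, by omega⟩
  have hcop : IsCoprime ((Xmat d C (m + 1)).updateCol (Fin.last m)
      (Pi.single (Fin.last m) 1)).det (Xmat d C (m + 1)).det := by
    have h := isCoprime_detX_pred_detX C hd hX hn
    rw [Nat.add_sub_cancel] at h
    rwa [det_Xmat_updateCol_last]
  have hspan : Qlat d C (m + 1) ⊔ Submodule.span ℤ {fw (m + 1) (Fin.last m)} = ⊤ := by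
    rw [Qlat_eq_range_mulVecLin]
    exact Matrix.range_mulVecLin_sup_span_singleton_eq_top _ _ _ hcop
  refine ⟨?_, Submodule.exists_smul_eq_mk_of_sup_span_singleton_eq_top _ _ hspan⟩
  rw [Qlat_eq_range_mulVecLin]
  exact Matrix.natCard_quotient_range_mulVecLin _ hdet
end

section
/- Let X be extensible and λ, μ, ν ∈ H_2^+ with |λ|_X + |μ|_X = |ν|_X. If c_{λμ}^ν(n) > 0 for some n ≥ ℓ(λ+μ−ν, X), then dep(λ+μ−ν) ≥ 0, where dep is the common middle coefficient s in the expansion of (λ+μ−ν)^{(n)} in simple roots. -/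
open scoped BigOperators

def wt (n : ℕ) (x y : ℕ → ℤ) : Fin n → ℤ :=
  (∑ i : Fin n, x (i : ℕ) • fw n i) + ∑ j : Fin n, y (j : ℕ) • fw n j.rev

def Qpos (d : ℕ) (C : Matrix (Fin d) (Fin d) ℤ) (n : ℕ) : Set (Fin n → ℤ) :=
  { v | ∃ m : Fin n → ℕ, v = ∑ i : Fin n, (m i : ℤ) • col d C n i }

def FinSuppSeq (x : ℕ → ℤ) : Prop := ∃ L, ∀ i, L ≤ i → x i = 0

def nob (d : ℕ) (C : Matrix (Fin d) (Fin d) ℤ) (a : ℕ → ℤ)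
    (x y : ℕ → ℤ) (lx ly : ℕ) : ℤ :=
  (∑ i ∈ Finset.range lx, a i * x i) - Δdiff d C * ∑ j ∈ Finset.range ly, ((j : ℤ) + 1) * y j

def coeffPat (l r n : ℕ) (p q : ℕ → ℤ) (s : ℤ) (m : Fin n) : ℤ :=
  if (m : ℕ) + 1 < l then p (m : ℕ)
  else if (m : ℕ) ≤ n - r then s
  else q (n - 1 - (m : ℕ))

def StableGE (d : ℕ) (C : Matrix (Fin d) (Fin d) ℤ) (x₁ y₁ x₂ y₂ : ℕ → ℤ) : Prop :=
  ∃ (l r : ℕ) (p q : ℕ → ℤ) (s : ℤ),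
    (∀ i, 0 ≤ p i) ∧ (∀ j, 0 ≤ q j) ∧ 0 ≤ s ∧
    ∀ n, l + r ≤ n →
      wt n x₁ y₁ - wt n x₂ y₂ = ∑ m : Fin n, coeffPat l r n p q s m • col d C n m

/-- Nonnegativity of depth: if `λ, μ, ν ∈ H₂⁺` satisfy
`|λ|_X + |μ|_X = |ν|_X`, the weight `λ^{(n)} + μ^{(n)} - ν^{(n)}` has the
stable expansion with middle coefficient `s = dep(λ+μ-ν)`, and the tensor
multiplicity `c_{λμ}^ν(n)` is positive for some `n ≥ ℓ(λ+μ-ν, X)` (with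
`det C(X_n) ≠ 0`, so that simple-root coordinates are unique), then `s ≥ 0`.
Positivity of the multiplicity is used only through the fact that it forces
`λ^{(n)} + μ^{(n)} - ν^{(n)} ∈ Q⁺(X_n)`. -/
theorem tensor_stab_depth_nonneg (d : ℕ) (hd : 1 ≤ d)
    (C : Matrix (Fin d) (Fin d) ℤ) (hX : Extensible d C)
    (a : ℕ → ℤ) (ha : ASeq d C a)
    (xl yl xm ym xn yn : ℕ → ℤ)
    (hxl0 : ∀ i, 0 ≤ xl i) (hyl0 : ∀ i, 0 ≤ yl i)
    (hxm0 : ∀ i, 0 ≤ xm i) (hym0 : ∀ i, 0 ≤ ym i)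
    (hxn0 : ∀ i, 0 ≤ xn i) (hyn0 : ∀ i, 0 ≤ yn i)
    (l r : ℕ) (hld : d ≤ l) (p q : ℕ → ℤ) (s : ℤ)
    (hdec : ∀ n, l + r ≤ n →
      wt n xl yl + wt n xm ym - wt n xn yn
        = ∑ m : Fin n, coeffPat l r n p q s m • col d C n m)
    (c : ℕ → ℕ)
    (hc : ∀ n, 0 < c n →
      wt n xl yl + wt n xm ym - wt n xn yn ∈ Qpos d C n)
    (hex : ∃ n, l + r ≤ n ∧ detX d C n ≠ 0 ∧ 0 < c n) :
    0 ≤ s := by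
  obtain ⟨n, hn, hdet, hcn⟩ := hex
  obtain ⟨mv, hmv⟩ := hc n hcn
  have hdn := hdec n hn
  -- turn both sums into mulVec
  have key : ∀ v : Fin n → ℤ,
      (∑ j : Fin n, v j • col d C n j) = (Xmat d C n).mulVec v := by
    intro v
    funext i
    simp [Matrix.mulVec, dotProduct, col, Finset.sum_apply, mul_comm]
  have heq : (Xmat d C n).mulVec (fun j => coeffPat l r n p q s j)
      = (Xmat d C n).mulVec (fun j => (mv j : ℤ)) := by
    rw [← key, ← key, ← hdn, hmv]
  have hinj : (fun j => coeffPat l r n p q s j) = (fun j => (mv j : ℤ)) := by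
    have hz : (Xmat d C n).mulVec
        ((fun j => coeffPat l r n p q s j) - fun j => (mv j : ℤ)) = 0 := by
      rw [Matrix.mulVec_sub, heq, sub_self]
    have := Matrix.eq_zero_of_mulVec_eq_zero hdet hz
    funext j
    have := congrFun this j
    simpa [sub_eq_zero] using this
  -- evaluate at index l - 1
  have hl1 : l - 1 < n := by omega
  have := congrFun hinj ⟨l - 1, hl1⟩
  have hpat : coeffPat l r n p q s ⟨l - 1, hl1⟩ = s := by
    unfold coeffPat
    have h1 : ¬ (l - 1 + 1 < l) := by omega
    have h2 : l - 1 ≤ n - r := by omega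
    simp [h1, h2]
  rw [hpat] at this
  rw [this]
  exact Int.natCast_nonneg _
end

section
/- Interval stabilization: let X be extensible and λ₁ ≥ λ₂ in H_2^+ with respect to the stable dominance order. Then the interval I(λ₁,λ₂) = {γ ∈ H_2^+ : λ₁ ≥ γ ≥ λ₂} is finite, and there exists N such that for all n ≥ N the interval I^{(n)}(λ₁,λ₂) = {β ∈ P^+(X_n) : λ₁^{(n)} ≥ β ≥ λ₂^{(n)}} equals {γ^{(n)} : γ ∈ I(λ₁,λ₂)}. -/
open scoped BigOperators

namespace TSIAux

/-- `n`-independent entry function of `Xmat`. -/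
def ent (d : ℕ) (C : Matrix (Fin d) (Fin d) ℤ) (k i : ℕ) : ℤ :=
  if h : k < d ∧ i < d then C ⟨k, h.1⟩ ⟨i, h.2⟩
  else if k = i then 2
  else if k + 1 = i ∨ i + 1 = k then -1
  else 0

lemma xmat_apply (d : ℕ) (C : Matrix (Fin d) (Fin d) ℤ) (n : ℕ) (i j : Fin n) :
    Xmat d C n i j = ent d C i j := rfl

/-- extension of a finite vector by zero -/
def ext (n : ℕ) (a : Fin n → ℤ) (i : ℕ) : ℤ := if h : i < n then a ⟨i, h⟩ else 0

lemma ext_lt (n : ℕ) (a : Fin n → ℤ) (i : ℕ) (h : i < n) : ext n a i = a ⟨i, h⟩ := dif_pos h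

lemma ext_ge (n : ℕ) (a : Fin n → ℤ) (i : ℕ) (h : n ≤ i) : ext n a i = 0 := dif_neg (by omega)

lemma ext_fin (n : ℕ) (a : Fin n → ℤ) (k : Fin n) : ext n a k = a k := by
  rw [ext_lt n a k k.isLt]

lemma wt_apply (n : ℕ) (x y : ℕ → ℤ) (k : Fin n) :
    wt n x y k = x k + y (n - 1 - (k : ℕ)) := by
  unfold wt fw
  simp only [Pi.add_apply, Finset.sum_apply, Pi.smul_apply, Pi.single_apply, smul_eq_mul,
    mul_ite, mul_one, mul_zero]
  have h1 : (∑ i : Fin n, if k = i then x (i : ℕ) else 0) = x k := by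
    rw [Finset.sum_ite_eq Finset.univ k (fun i : Fin n => x (i : ℕ))]
    simp
  have h2 : (∑ j : Fin n, if k = j.rev then y (j : ℕ) else 0) = y (n - 1 - (k : ℕ)) := by
    have : ∀ j : Fin n, (if k = j.rev then y (j : ℕ) else 0) = (if j = k.rev then y (j : ℕ) else 0) := by
      intro j
      congr 1
      simp only [eq_iff_iff]
      constructor
      · intro h; rw [h, Fin.rev_rev]
      · intro h; rw [h, Fin.rev_rev]
    rw [Finset.sum_congr rfl (fun j _ => this j),
      Finset.sum_ite_eq' Finset.univ k.rev (fun j : Fin n => y (j : ℕ))]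
    simp only [Fin.val_rev]
    have he : n - ((k : ℕ) + 1) = n - 1 - (k : ℕ) := by omega
    rw [he, if_pos (Finset.mem_univ _)]
  rw [h1, h2]

lemma mulVec_apply (d : ℕ) (C : Matrix (Fin d) (Fin d) ℤ) (n : ℕ) (a : Fin n → ℤ) (k : Fin n) :
    (Xmat d C n).mulVec a k = ∑ i ∈ Finset.range n, ent d C (k : ℕ) i * ext n a i := by
  have h0 : (Xmat d C n).mulVec a k = ∑ i : Fin n, ent d C (k : ℕ) (i : ℕ) * ext n a (i : ℕ) := by
    simp only [Matrix.mulVec, dotProduct]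
    refine Finset.sum_congr rfl fun i _ => ?_
    show Xmat d C n k i * a i = _
    rw [xmat_apply, ext_fin]
  rw [h0]
  exact Fin.sum_univ_eq_sum_range (fun i => ent d C (k : ℕ) i * ext n a i) n

lemma sum_smul_col (d : ℕ) (C : Matrix (Fin d) (Fin d) ℤ) (n : ℕ) (a : Fin n → ℤ) :
    ∑ i : Fin n, a i • col d C n i = (Xmat d C n).mulVec a := by
  funext k
  simp only [Finset.sum_apply, Pi.smul_apply, col, smul_eq_mul, Matrix.mulVec, dotProduct]
  exact Finset.sum_congr rfl fun i _ => mul_comm _ _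

lemma mulVec_hi (d : ℕ) (C : Matrix (Fin d) (Fin d) ℤ) (n : ℕ) (hd : 1 ≤ d)
    (a : Fin n → ℤ) (k : Fin n) (hk : d ≤ (k : ℕ)) :
    (Xmat d C n).mulVec a k =
      2 * ext n a (k : ℕ) - ext n a ((k : ℕ) - 1) - ext n a ((k : ℕ) + 1) := by
  rw [mulVec_apply]
  have hent : ∀ i ∈ Finset.range n, ent d C (k : ℕ) i * ext n a i =
      ((if i = (k : ℕ) then 2 * ext n a i else 0) -
       (if i = (k : ℕ) - 1 then ext n a i else 0)) -
       (if i = (k : ℕ) + 1 then ext n a i else 0) := by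
    intro i _
    have h1 : ¬((k : ℕ) < d ∧ i < d) := by omega
    rw [ent, dif_neg h1]
    by_cases h2 : (k : ℕ) = i
    · rw [if_pos h2, if_pos h2.symm, if_neg (by omega), if_neg (by omega)]; ring
    · rw [if_neg h2]
      by_cases h3 : (k : ℕ) + 1 = i ∨ i + 1 = (k : ℕ)
      · rw [if_pos h3]
        rcases h3 with h3 | h3
        · rw [if_neg (by omega), if_neg (by omega), if_pos (by omega)]; ring
        · rw [if_neg (by omega), if_pos (by omega), if_neg (by omega)]; ring
      · rw [if_neg h3, if_neg (by omega), if_neg (by omega), if_neg (by omega)]; ring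
  rw [Finset.sum_congr rfl hent]
  rw [Finset.sum_sub_distrib, Finset.sum_sub_distrib]
  rw [Finset.sum_ite_eq' (Finset.range n) ((k : ℕ)) (fun i => 2 * ext n a i),
    Finset.sum_ite_eq' (Finset.range n) ((k : ℕ) - 1) (fun i => ext n a i),
    Finset.sum_ite_eq' (Finset.range n) ((k : ℕ) + 1) (fun i => ext n a i)]
  rw [if_pos (Finset.mem_range.mpr k.isLt), if_pos (Finset.mem_range.mpr (by omega : (k:ℕ) - 1 < n))]
  by_cases h4 : (k : ℕ) + 1 < n
  · rw [if_pos (Finset.mem_range.mpr h4)]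
  · rw [if_neg (by simp [Finset.mem_range]; omega), ext_ge n a ((k:ℕ)+1) (by omega)]

lemma mulVec_lo (d : ℕ) (C : Matrix (Fin d) (Fin d) ℤ) (n : ℕ) (hdn : d < n)
    (a : Fin n → ℤ) (k : Fin n) (hk : (k : ℕ) < d) :
    (Xmat d C n).mulVec a k =
      (∑ i ∈ Finset.range d, ent d C (k : ℕ) i * ext n a i) +
      (if (k : ℕ) + 1 = d then -(ext n a d) else 0) := by
  rw [mulVec_apply]
  rw [← Finset.sum_range_add_sum_Ico _ (le_of_lt hdn)]
  congr 1
  have hent : ∀ i ∈ Finset.Ico d n, ent d C (k : ℕ) i * ext n a i =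
      (if i = (k : ℕ) + 1 then -(ext n a i) else 0) := by
    intro i hi
    rw [Finset.mem_Ico] at hi
    have h1 : ¬((k : ℕ) < d ∧ i < d) := by omega
    rw [ent, dif_neg h1]
    by_cases h2 : i = (k : ℕ) + 1
    · rw [if_neg (by omega), if_pos (by omega), if_pos h2]; ring
    · rw [if_neg (by omega), if_neg (by omega), if_neg h2]; ring
  rw [Finset.sum_congr rfl hent,
    Finset.sum_ite_eq' (Finset.Ico d n) ((k : ℕ) + 1) (fun i => -(ext n a i))]
  by_cases h3 : (k : ℕ) + 1 = d
  · rw [if_pos (by rw [Finset.mem_Ico]; omega), if_pos h3, h3]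
  · rw [if_neg (by rw [Finset.mem_Ico]; omega), if_neg h3]

end TSIAux

namespace TSIAux

lemma detX_rec (d : ℕ) (C : Matrix (Fin d) (Fin d) ℤ) (hd : 1 ≤ d) (m : ℕ) (hn : d ≤ m + 1) :
    detX d C (m + 2) = 2 * detX d C (m + 1) - detX d C m := by
  set A : Matrix (Fin (m + 2)) (Fin (m + 2)) ℤ := Xmat d C (m + 2) with hA
  have hAe : ∀ i j : Fin (m + 2), A i j = ent d C (i : ℕ) (j : ℕ) := fun i j => rfl
  set J1 : Fin (m + 2) := Fin.last (m + 1) with hJ1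
  set J2 : Fin (m + 2) := ⟨m, by omega⟩ with hJ2
  have hrow : detX d C (m + 2) =
      ∑ j : Fin (m + 2), (-1 : ℤ) ^ ((J1 : ℕ) + (j : ℕ)) * A J1 j *
        (A.submatrix J1.succAbove j.succAbove).det := by
    rw [detX, Matrix.det_succ_row A J1]
  have hzero : ∀ j : Fin (m + 2), j ≠ J1 → j ≠ J2 → A J1 j = 0 := by
    intro j hj1 hj2
    have hv1 : (j : ℕ) ≠ m + 1 := fun h => hj1 (Fin.ext h)
    have hv2 : (j : ℕ) ≠ m := fun h => hj2 (Fin.ext h)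
    rw [hAe]
    have : (J1 : ℕ) = m + 1 := rfl
    rw [this, ent, dif_neg (by omega), if_neg (by omega), if_neg (by omega)]
  have hsub : detX d C (m + 2) =
      ∑ j ∈ ({J1, J2} : Finset (Fin (m + 2))), (-1 : ℤ) ^ ((J1 : ℕ) + (j : ℕ)) * A J1 j *
        (A.submatrix J1.succAbove j.succAbove).det := by
    rw [hrow]
    refine (Finset.sum_subset (Finset.subset_univ _) ?_).symm
    intro j _ hj
    simp only [Finset.mem_insert, Finset.mem_singleton, not_or] at hj
    rw [hzero j hj.1 hj.2, mul_zero, zero_mul]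
  have hne : J1 ≠ J2 := by
    intro h
    have : (m + 1 : ℕ) = m := congrArg Fin.val h
    omega
  rw [Finset.sum_pair hne] at hsub
  -- evaluate the J1 term
  have hA11 : A J1 J1 = 2 := by
    rw [hAe]
    show ent d C (m + 1) (m + 1) = 2
    rw [ent, dif_neg (by omega), if_pos rfl]
  have hsign1 : (-1 : ℤ) ^ ((J1 : ℕ) + (J1 : ℕ)) = 1 := by
    show (-1 : ℤ) ^ ((m + 1) + (m + 1)) = 1
    exact Even.neg_one_pow ⟨m + 1, by ring⟩
  have hmin1 : (A.submatrix J1.succAbove J1.succAbove).det = detX d C (m + 1) := by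
    congr 1
    ext i j
    rw [Matrix.submatrix_apply, hJ1, Fin.succAbove_last, hAe]
    show ent d C ((Fin.castSucc i : Fin (m+2)) : ℕ) ((Fin.castSucc j : Fin (m+2)) : ℕ) = _
    rw [Fin.coe_castSucc, Fin.coe_castSucc]
    rfl
  -- evaluate the J2 term
  have hA12 : A J1 J2 = -1 := by
    rw [hAe]
    show ent d C (m + 1) m = -1
    rw [ent, dif_neg (by omega), if_neg (by omega), if_pos (by omega)]
  have hsign2 : (-1 : ℤ) ^ ((J1 : ℕ) + (J2 : ℕ)) = -1 := by
    show (-1 : ℤ) ^ ((m + 1) + m) = -1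
    exact Odd.neg_one_pow ⟨m, by ring⟩
  -- the second minor
  set B : Matrix (Fin (m + 1)) (Fin (m + 1)) ℤ := A.submatrix J1.succAbove J2.succAbove with hB
  have hBdet : B.det = -(detX d C m) := by
    have hcol : B.det = ∑ i : Fin (m + 1), (-1 : ℤ) ^ ((i : ℕ) + ((Fin.last m : Fin (m+1)) : ℕ)) *
        B i (Fin.last m) * (B.submatrix i.succAbove (Fin.last m).succAbove).det := by
      rw [Matrix.det_succ_column B (Fin.last m)]
    have hcolv : ((J2.succAbove (Fin.last m)) : ℕ) = m + 1 := by
      have hle : J2 ≤ Fin.castSucc (Fin.last m) := by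
        rw [Fin.le_def]
        show m ≤ m
        exact le_refl m
      rw [Fin.succAbove_of_le_castSucc J2 (Fin.last m) hle]
      rfl
    have hBe : ∀ i : Fin (m + 1), B i (Fin.last m) = ent d C (i : ℕ) (m + 1) := by
      intro i
      rw [hB, Matrix.submatrix_apply, hJ1, Fin.succAbove_last, hAe, Fin.coe_castSucc, hcolv]
    have hz : ∀ i : Fin (m + 1), i ≠ Fin.last m → B i (Fin.last m) = 0 := by
      intro i hi
      have hv : (i : ℕ) ≠ m := fun h => hi (Fin.ext h)
      have hv2 : (i : ℕ) < m + 1 := i.isLt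
      rw [hBe i, ent, dif_neg (by omega), if_neg (by omega), if_neg (by omega)]
    have hsub2 : B.det = ∑ i ∈ ({Fin.last m} : Finset (Fin (m + 1))),
        (-1 : ℤ) ^ ((i : ℕ) + m) * B i (Fin.last m) *
        (B.submatrix i.succAbove (Fin.last m).succAbove).det := by
      rw [hcol]
      refine (Finset.sum_subset (Finset.subset_univ _) ?_).symm
      intro i _ hi
      simp only [Finset.mem_singleton] at hi
      rw [hz i hi, mul_zero, zero_mul]
    rw [Finset.sum_singleton] at hsub2
    have hBlast : B (Fin.last m) (Fin.last m) = -1 := by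
      rw [hBe, Fin.val_last, ent, dif_neg (by omega), if_neg (by omega), if_pos (by omega)]
    have hsign3 : (-1 : ℤ) ^ (((Fin.last m : Fin (m+1)) : ℕ) + m) = 1 := by
      show (-1 : ℤ) ^ (m + m) = 1
      exact Even.neg_one_pow ⟨m, by ring⟩
    have hmin2 : (B.submatrix (Fin.last m).succAbove (Fin.last m).succAbove).det = detX d C m := by
      congr 1
      ext i j
      rw [Matrix.submatrix_apply, Fin.succAbove_last, hB, Matrix.submatrix_apply, hJ1,
        Fin.succAbove_last, hAe]
      have hcol2 : ((J2.succAbove (Fin.castSucc j) : Fin (m + 2)) : ℕ) = (j : ℕ) := by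
        have hlt : Fin.castSucc (Fin.castSucc j) < J2 := by
          rw [Fin.lt_def]
          simp only [Fin.coe_castSucc]
          exact j.isLt
        rw [Fin.succAbove_of_castSucc_lt J2 (Fin.castSucc j) hlt]
        simp
      rw [hcol2]
      show ent d C ((Fin.castSucc (Fin.castSucc i) : Fin (m+2)) : ℕ) (j : ℕ) = _
      rw [Fin.coe_castSucc, Fin.coe_castSucc]
      rfl
    rw [hsub2, hBlast, hsign3, hmin2]
    show 1 * -1 * detX d C m = -detX d C m
    ring
  rw [hsub, hA11, hsign1, hmin1, hA12, hsign2, hBdet]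
  ring

lemma detX_formula (d : ℕ) (C : Matrix (Fin d) (Fin d) ℤ) (hd : 1 ≤ d) :
    ∀ n, d ≤ n → detX d C n = detX d C d + ((n : ℤ) - (d : ℤ)) * Δdiff d C := by
  intro n
  induction n using Nat.strong_induction_on with
  | _ n ih =>
    intro hn
    rcases Nat.lt_or_ge n (d + 1) with h | h
    · have : n = d := by omega
      subst this
      simp
    rcases Nat.lt_or_ge n (d + 2) with h2 | h2
    · have : n = d + 1 := by omega
      subst this
      obtain ⟨m, hm⟩ : ∃ m, d = m + 1 := ⟨d - 1, by omega⟩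
      have hrec := detX_rec d C hd m (by omega)
      have h1 : m + 2 = d + 1 := by omega
      have h2 : m + 1 = d := by omega
      have h3 : m = d - 1 := by omega
      rw [h1, h2, h3] at hrec
      rw [hrec, Δdiff]
      push_cast
      ring
    · obtain ⟨m, hm⟩ : ∃ m, n = m + 2 := ⟨n - 2, by omega⟩
      subst hm
      rw [detX_rec d C hd m (by omega)]
      rw [ih (m + 1) (by omega) (by omega), ih m (by omega) (by omega)]
      push_cast
      ring

end TSIAux

namespace TSIAux

lemma detX_ne (d : ℕ) (C : Matrix (Fin d) (Fin d) ℤ) (hd : 1 ≤ d) (hX : Extensible d C)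
    (n : ℕ) (hn : d + (detX d C d).natAbs + 1 ≤ n) : detX d C n ≠ 0 := by
  rw [detX_formula d C hd n (by omega)]
  intro h0
  have h1 : ((n : ℤ) - (d : ℤ)) * Δdiff d C = -detX d C d := by linarith
  have h2 : ((n : ℤ) - (d : ℤ)).natAbs * (Δdiff d C).natAbs = (detX d C d).natAbs := by
    rw [← Int.natAbs_mul, h1, Int.natAbs_neg]
  have h3 : ((n : ℤ) - (d : ℤ)).natAbs = n - d := by omega
  have h4 : 1 ≤ (Δdiff d C).natAbs := by
    have := hX.1
    omega
  have h5 : (n - d) * 1 ≤ (n - d) * (Δdiff d C).natAbs := Nat.mul_le_mul_left _ h4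
  rw [h3] at h2
  omega

lemma mulVec_inj (d : ℕ) (C : Matrix (Fin d) (Fin d) ℤ) (n : ℕ) (hdet : detX d C n ≠ 0)
    (a b : Fin n → ℤ) (h : (Xmat d C n).mulVec a = (Xmat d C n).mulVec b) : a = b := by
  have h2 : (Xmat d C n).adjugate.mulVec ((Xmat d C n).mulVec a)
      = (Xmat d C n).adjugate.mulVec ((Xmat d C n).mulVec b) := by rw [h]
  rw [Matrix.mulVec_mulVec, Matrix.mulVec_mulVec, Matrix.adjugate_mul] at h2
  funext i
  have h3 := congrFun h2 i
  simp only [Matrix.smul_mulVec, Matrix.one_mulVec, Pi.smul_apply, smul_eq_mul] at h3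
  exact mul_left_cancel₀ hdet h3

end TSIAux

namespace TSIAux

def pexp (l : ℕ) (p : ℕ → ℤ) (s : ℤ) (i : ℕ) : ℤ := if i + 1 < l then p i else s

def qexp (r : ℕ) (q : ℕ → ℤ) (s : ℤ) (j : ℕ) : ℤ := if j + 1 < r then q j else s

def RL (d : ℕ) (C : Matrix (Fin d) (Fin d) ℤ) (l : ℕ) (p : ℕ → ℤ) (s : ℤ) (k : ℕ) : ℤ :=
  if k < d then (∑ i ∈ Finset.range d, ent d C k i * pexp l p s i) +
    (if k + 1 = d then -(pexp l p s d) else 0)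
  else 2 * pexp l p s k - pexp l p s (k - 1) - pexp l p s (k + 1)

def RR (r : ℕ) (q : ℕ → ℤ) (s : ℤ) (j : ℕ) : ℤ :=
  2 * qexp r q s j - qexp r q s (j + 1) - (if j = 0 then 0 else qexp r q s (j - 1))

/-- the coefficient pattern as a vector -/
def patV (l r n : ℕ) (p q : ℕ → ℤ) (s : ℤ) : Fin n → ℤ := fun m => coeffPat l r n p q s m

lemma pat_left (l r n : ℕ) (p q : ℕ → ℤ) (s : ℤ) (k : ℕ) (hk : k < n) (hk2 : k ≤ n - r) :
    ext n (patV l r n p q s) k = pexp l p s k := by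
  rw [ext_lt n _ k hk]
  show coeffPat l r n p q s ⟨k, hk⟩ = pexp l p s k
  rw [coeffPat, pexp]
  by_cases h1 : k + 1 < l
  · rw [if_pos h1, if_pos h1]
  · rw [if_neg h1, if_neg h1, if_pos hk2]

lemma pat_right (l r n : ℕ) (p q : ℕ → ℤ) (s : ℤ) (hrn : r ≤ n) (k : ℕ) (hk : k < n)
    (hk2 : l ≤ k + 1) :
    ext n (patV l r n p q s) k = qexp r q s (n - 1 - k) := by
  rw [ext_lt n _ k hk]
  show coeffPat l r n p q s ⟨k, hk⟩ = qexp r q s (n - 1 - k)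
  rw [coeffPat, qexp, if_neg (by omega : ¬ k + 1 < l)]
  by_cases h2 : k ≤ n - r
  · rw [if_pos h2, if_neg (by omega : ¬ (n - 1 - k) + 1 < r)]
  · rw [if_neg h2, if_pos (by omega : (n - 1 - k) + 1 < r)]

lemma EV1 (d : ℕ) (C : Matrix (Fin d) (Fin d) ℤ) (hd : 1 ≤ d) (l r n : ℕ)
    (p q : ℕ → ℤ) (s : ℤ) (hdl : d ≤ l) (hr1 : 1 ≤ r) (hlr : l + r ≤ n)
    (k : Fin n) (hk : (k : ℕ) + r + 1 ≤ n) :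
    (Xmat d C n).mulVec (patV l r n p q s) k = RL d C l p s (k : ℕ) := by
  by_cases hkd : (k : ℕ) < d
  · rw [mulVec_lo d C n (by omega) _ k hkd, RL, if_pos hkd]
    congr 1
    · refine Finset.sum_congr rfl fun i hi => ?_
      rw [Finset.mem_range] at hi
      rw [pat_left l r n p q s i (by omega) (by omega)]
    · by_cases h2 : (k : ℕ) + 1 = d
      · rw [if_pos h2, if_pos h2, pat_left l r n p q s d (by omega) (by omega)]
      · rw [if_neg h2, if_neg h2]
  · rw [mulVec_hi d C n hd _ k (by omega), RL, if_neg hkd,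
      pat_left l r n p q s (k : ℕ) (by omega) (by omega),
      pat_left l r n p q s ((k : ℕ) - 1) (by omega) (by omega),
      pat_left l r n p q s ((k : ℕ) + 1) (by omega) (by omega)]

lemma EV2 (d : ℕ) (C : Matrix (Fin d) (Fin d) ℤ) (hd : 1 ≤ d) (l r n : ℕ)
    (p q : ℕ → ℤ) (s : ℤ) (hdl : d ≤ l) (hlr : l + r ≤ n)
    (k : Fin n) (hk : l ≤ (k : ℕ)) :
    (Xmat d C n).mulVec (patV l r n p q s) k = RR r q s (n - 1 - (k : ℕ)) := by
  have hkd : d ≤ (k : ℕ) := le_trans hdl hk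
  have hkn : (k : ℕ) < n := k.isLt
  rw [mulVec_hi d C n hd _ k hkd, RR]
  rw [pat_right l r n p q s (by omega) (k : ℕ) hkn (by omega)]
  rw [pat_right l r n p q s (by omega) ((k : ℕ) - 1) (by omega) (by omega)]
  have he1 : n - 1 - ((k : ℕ) - 1) = (n - 1 - (k : ℕ)) + 1 := by omega
  rw [he1]
  by_cases h2 : (k : ℕ) + 1 < n
  · rw [pat_right l r n p q s (by omega) ((k : ℕ) + 1) h2 (by omega)]
    have he2 : n - 1 - ((k : ℕ) + 1) = (n - 1 - (k : ℕ)) - 1 := by omega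
    rw [he2, if_neg (by omega : ¬ n - 1 - (k : ℕ) = 0)]
  · rw [ext_ge n _ ((k : ℕ) + 1) (by omega), if_pos (by omega : n - 1 - (k : ℕ) = 0)]

lemma RL_zero (d : ℕ) (C : Matrix (Fin d) (Fin d) ℤ) (l : ℕ) (p : ℕ → ℤ) (s : ℤ)
    (hdl : d ≤ l) (hd : 1 ≤ d) (k : ℕ) (hk : l ≤ k) : RL d C l p s k = 0 := by
  rw [RL, if_neg (by omega)]
  rw [pexp, if_neg (by omega), pexp, if_neg (by omega), pexp, if_neg (by omega)]
  ring

lemma RR_zero (r : ℕ) (q : ℕ → ℤ) (s : ℤ) (hr : 1 ≤ r) (j : ℕ) (hj : r ≤ j) :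
    RR r q s j = 0 := by
  rw [RR, if_neg (by omega)]
  rw [qexp, if_neg (by omega), qexp, if_neg (by omega), qexp, if_neg (by omega)]
  ring

lemma lhs_entry (n : ℕ) (u₁ v₁ u₂ v₂ : ℕ → ℤ) (k : Fin n) :
    (wt n u₁ v₁ - wt n u₂ v₂) k =
      (u₁ (k : ℕ) - u₂ (k : ℕ)) + (v₁ (n - 1 - (k : ℕ)) - v₂ (n - 1 - (k : ℕ))) := by
  rw [Pi.sub_apply, wt_apply, wt_apply]
  ring

lemma transport (d : ℕ) (C : Matrix (Fin d) (Fin d) ℤ) (hd : 1 ≤ d)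
    (l r : ℕ) (p q : ℕ → ℤ) (s : ℤ) (u₁ v₁ u₂ v₂ : ℕ → ℤ) (L : ℕ)
    (hu₁ : ∀ i, L ≤ i → u₁ i = 0) (hv₁ : ∀ i, L ≤ i → v₁ i = 0)
    (hu₂ : ∀ i, L ≤ i → u₂ i = 0) (hv₂ : ∀ i, L ≤ i → v₂ i = 0)
    (hdl : d ≤ l) (hLl : L ≤ l) (hLr : L + 1 ≤ r)
    (n₀ : ℕ) (hn₀ : l + r ≤ n₀)
    (h : wt n₀ u₁ v₁ - wt n₀ u₂ v₂ = (Xmat d C n₀).mulVec (patV l r n₀ p q s)) :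
    ∀ n, l + r ≤ n → wt n u₁ v₁ - wt n u₂ v₂ = (Xmat d C n).mulVec (patV l r n p q s) := by
  have hFRL : ∀ k : ℕ, k + r + 1 ≤ n₀ → u₁ k - u₂ k = RL d C l p s k := by
    intro k hk
    have hkf : k < n₀ := by omega
    have := congrFun h ⟨k, hkf⟩
    rw [lhs_entry, EV1 d C hd l r n₀ p q s hdl (by omega) hn₀ ⟨k, hkf⟩ hk] at this
    rw [hv₁ (n₀ - 1 - k) (by omega), hv₂ (n₀ - 1 - k) (by omega)] at this
    simpa using this
  have hGRR : ∀ j : ℕ, j + 1 ≤ r → v₁ j - v₂ j = RR r q s j := by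
    intro j hj
    have hkf : n₀ - 1 - j < n₀ := by omega
    have := congrFun h ⟨n₀ - 1 - j, hkf⟩
    rw [lhs_entry, EV2 d C hd l r n₀ p q s hdl hn₀ ⟨n₀ - 1 - j, hkf⟩ (by
      show l ≤ n₀ - 1 - j
      omega)] at this
    rw [hu₁ (n₀ - 1 - j) (by omega), hu₂ (n₀ - 1 - j) (by omega)] at this
    have he : n₀ - 1 - (n₀ - 1 - j) = j := by omega
    rw [he] at this
    simpa using this
  intro n hn
  funext k
  by_cases hc : (k : ℕ) + r + 1 ≤ n
  · rw [lhs_entry, EV1 d C hd l r n p q s hdl (by omega) hn k hc]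
    rw [hv₁ (n - 1 - (k : ℕ)) (by omega), hv₂ (n - 1 - (k : ℕ)) (by omega)]
    have : u₁ (k : ℕ) - u₂ (k : ℕ) = RL d C l p s (k : ℕ) := by
      by_cases h2 : (k : ℕ) + r + 1 ≤ n₀
      · exact hFRL _ h2
      · have hkl : l ≤ (k : ℕ) := by omega
        rw [hu₁ _ (by omega), hu₂ _ (by omega), RL_zero d C l p s hdl hd _ hkl]
        ring
    rw [this]
    ring
  · have hkl : l ≤ (k : ℕ) := by
      have := k.isLt
      omega
    rw [lhs_entry, EV2 d C hd l r n p q s hdl hn k hkl]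
    rw [hu₁ (k : ℕ) (by omega), hu₂ (k : ℕ) (by omega)]
    have hj : (n - 1 - (k : ℕ)) + 1 ≤ r := by
      have := k.isLt
      omega
    rw [hGRR _ hj]
    ring

end TSIAux

namespace TSIAux

lemma slope_mono (f : ℕ → ℤ) (a b : ℕ)
    (hconv : ∀ k, a < k → k < b → 2 * f k ≤ f (k - 1) + f (k + 1)) :
    ∀ j k, a ≤ j → j ≤ k → k < b → f (j + 1) - f j ≤ f (k + 1) - f k := by
  intro j k hj hjk
  induction k with
  | zero =>
    intro _
    have : j = 0 := by omega
    subst this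
    exact le_refl _
  | succ k ih =>
    intro hkb
    rcases Nat.lt_or_ge j (k + 1) with h | h
    · have h1 := ih (by omega) (by omega)
      have h2 := hconv (k + 1) (by omega) hkb
      have h3 : (k + 1) - 1 = k := by omega
      rw [h3] at h2
      omega
    · have : j = k + 1 := by omega
      subst this
      exact le_refl _

lemma step_up (f : ℕ → ℤ) (k b : ℕ) (h : ∀ j, k ≤ j → j < b → f j + 1 ≤ f (j + 1)) :
    ∀ j, k ≤ j → j ≤ b → f k + ((j - k : ℕ) : ℤ) ≤ f j := by
  intro j hkj
  induction j with
  | zero =>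
    intro _
    have : k = 0 := by omega
    subst this
    simp
  | succ j ih =>
    intro hjb
    rcases Nat.lt_or_ge k (j + 1) with h2 | h2
    · have h3 := ih (by omega) (by omega)
      have h4 := h j (by omega) (by omega)
      have h5 : ((j + 1 - k : ℕ) : ℤ) = ((j - k : ℕ) : ℤ) + 1 := by omega
      omega
    · have : k = j + 1 := by omega
      subst this
      simp

lemma step_down (f : ℕ → ℤ) (a : ℕ) (h : ∀ j, a ≤ j → f (j + 1) ≤ f j - 1) :
    ∀ j, a ≤ j → f j ≤ f a - ((j - a : ℕ) : ℤ) := by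
  intro j haj
  induction j with
  | zero =>
    have : a = 0 := by omega
    subst this
    simp
  | succ j ih =>
    rcases Nat.lt_or_ge a (j + 1) with h2 | h2
    · have h3 := ih (by omega)
      have h4 := h j (by omega)
      have h5 : ((j + 1 - a : ℕ) : ℤ) = ((j - a : ℕ) : ℤ) + 1 := by omega
      omega
    · have : a = j + 1 := by omega
      subst this
      simp

lemma plateau_step (f : ℕ → ℤ) (a b : ℕ) (B : ℕ)
    (h0 : ∀ k, a ≤ k → k ≤ b → 0 ≤ f k ∧ f k ≤ (B : ℤ))
    (hconv : ∀ k, a < k → k < b → 2 * f k ≤ f (k - 1) + f (k + 1)) :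
    ∀ k, a + B ≤ k → k + B + 1 ≤ b → f (k + 1) = f k := by
  intro k hk1 hk2
  by_contra hne
  rcases lt_or_gt_of_ne hne with hlt | hgt
  · -- f (k+1) < f k : slope ≤ -1 on [a, k], so f decreased too much
    have hdown : ∀ j, a ≤ j → j ≤ k → f (j + 1) ≤ f j - 1 := by
      intro j hja hjk
      have := slope_mono f a b hconv j k hja hjk (by omega)
      omega
    have hd2 : ∀ j, a ≤ j → j ≤ k → f j ≤ f a - ((j - a : ℕ) : ℤ) := by
      intro j hja hjk
      -- can't directly use step_down since hypothesis restricted; redo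
      induction j with
      | zero =>
        have : a = 0 := by omega
        subst this
        simp
      | succ j ih =>
        rcases Nat.lt_or_ge a (j + 1) with h2 | h2
        · have h3 := ih (by omega) (by omega)
          have h4 := hdown j (by omega) (by omega)
          have h5 : ((j + 1 - a : ℕ) : ℤ) = ((j - a : ℕ) : ℤ) + 1 := by omega
          omega
        · have : a = j + 1 := by omega
          subst this
          simp
    have h6 := hd2 k (by omega) (le_refl k)
    have h7 := hdown k (by omega) (le_refl k)
    have h8 := (h0 a (le_refl a) (by omega)).2
    have h9 := (h0 (k + 1) (by omega) (by omega)).1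
    have h10 : ((k - a : ℕ) : ℤ) ≥ (B : ℤ) := by omega
    omega
  · -- f (k+1) > f k : slope ≥ 1 on [k, b-1], so f increases too much
    have hup : ∀ j, k ≤ j → j < b → f j + 1 ≤ f (j + 1) := by
      intro j hkj hjb
      have := slope_mono f a b hconv k j (by omega) hkj hjb
      omega
    have h6 := step_up f k b hup b (by omega) (le_refl b)
    have h8 := (h0 k (by omega) (by omega)).1
    have h9 := (h0 b (by omega) (le_refl b)).2
    have h10 : ((b - k : ℕ) : ℤ) ≥ (B : ℤ) + 1 := by omega
    omega

lemma plateau_const (f : ℕ → ℤ) (a b : ℕ) (B : ℕ)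
    (h0 : ∀ k, a ≤ k → k ≤ b → 0 ≤ f k ∧ f k ≤ (B : ℤ))
    (hconv : ∀ k, a < k → k < b → 2 * f k ≤ f (k - 1) + f (k + 1)) :
    ∀ k, a + B ≤ k → k + B ≤ b → f k = f (a + B) := by
  intro k hk1
  induction k with
  | zero =>
    intro _
    have : a + B = 0 := by omega
    rw [this]
  | succ k ih =>
    intro hk2
    rcases Nat.lt_or_ge (a + B) (k + 1) with h2 | h2
    · have h3 := ih (by omega) (by omega)
      have h4 := plateau_step f a b B h0 hconv k (by omega) (by omega)
      omega
    · have : a + B = k + 1 := by omega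
      rw [← this]

end TSIAux

namespace TSIAux

lemma patV_mk (l r n : ℕ) (p q : ℕ → ℤ) (s : ℤ) (k : ℕ) (hk : k < n) :
    patV l r n p q s ⟨k, hk⟩ =
      if k + 1 < l then p k else if k ≤ n - r then s else q (n - 1 - k) := rfl

lemma key (d : ℕ) (C : Matrix (Fin d) (Fin d) ℤ) (hd : 1 ≤ d) (hX : Extensible d C)
    (x₁ y₁ x₂ y₂ : ℕ → ℤ)
    (hx₁0 : ∀ i, 0 ≤ x₁ i) (hy₁0 : ∀ i, 0 ≤ y₁ i)
    (l₀ r₀ : ℕ) (p₀ q₀ : ℕ → ℤ) (s₀ : ℤ)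
    (hp₀ : ∀ i, 0 ≤ p₀ i) (hq₀ : ∀ j, 0 ≤ q₀ j) (hs₀ : 0 ≤ s₀)
    (hpat₀ : ∀ n, l₀ + r₀ ≤ n →
      wt n x₁ y₁ - wt n x₂ y₂ = ∑ m : Fin n, coeffPat l₀ r₀ n p₀ q₀ s₀ m • col d C n m)
    (L₀ : ℕ)
    (hL₀ : ∀ i, L₀ ≤ i → x₁ i = 0 ∧ y₁ i = 0 ∧ x₂ i = 0 ∧ y₂ i = 0)
    (hL₀l : l₀ ≤ L₀) (hL₀r : r₀ ≤ L₀) (hL₀d : d ≤ L₀) (hL₀1 : 1 ≤ L₀)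
    (B : ℤ) (hBdef : B = s₀ + ∑ i ∈ Finset.range L₀, (p₀ i + q₀ i))
    (E : ℕ) (hEdef : E = L₀ + B.toNat + 1)
    (W : ℤ) (hWdef : W = 2 + ∑ j ∈ Finset.range d, ∑ i ∈ Finset.range d, |ent d C j i|)
    (V : ℤ) (hVdef : V = (∑ i ∈ Finset.range L₀, (x₁ i + y₁ i)) + B * W)
    (n : ℕ)
    (hn₁ : d + (detX d C d).natAbs + 1 ≤ n)
    (hn₂ : 4 * E + 8 ≤ n)
    (β : Fin n → ℤ) (hβ0 : ∀ i, 0 ≤ β i)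
    (h1 : wt n x₁ y₁ - β ∈ Qpos d C n) (h2 : β - wt n x₂ y₂ ∈ Qpos d C n) :
    (∀ k : Fin n, β k ≤ V) ∧
    (∀ k : Fin n, E ≤ (k : ℕ) → (k : ℕ) + E < n → β k = 0) ∧
    ∃ γ₁ γ₂ : ℕ → ℤ, (∀ i, 0 ≤ γ₁ i) ∧ (∀ j, 0 ≤ γ₂ j) ∧ FinSuppSeq γ₁ ∧ FinSuppSeq γ₂ ∧
      StableGE d C x₁ y₁ γ₁ γ₂ ∧ StableGE d C γ₁ γ₂ x₂ y₂ ∧ wt n γ₁ γ₂ = β := by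
  have hBnn : 0 ≤ B := by
    rw [hBdef]
    have : (0 : ℤ) ≤ ∑ i ∈ Finset.range L₀, (p₀ i + q₀ i) :=
      Finset.sum_nonneg fun i _ => add_nonneg (hp₀ i) (hq₀ i)
    linarith
  -- the decompositions
  obtain ⟨mN, hmN⟩ := h1
  obtain ⟨mN', hmN'⟩ := h2
  set m : Fin n → ℤ := fun i => (mN i : ℤ) with hmdef
  set m' : Fin n → ℤ := fun i => (mN' i : ℤ) with hm'def
  have hm0 : ∀ i, 0 ≤ m i := fun i => Int.ofNat_nonneg (mN i)
  have hm'0 : ∀ i, 0 ≤ m' i := fun i => Int.ofNat_nonneg (mN' i)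
  have hm : wt n x₁ y₁ - β = (Xmat d C n).mulVec m := by
    rw [hmN]; exact sum_smul_col d C n m
  have hm' : β - wt n x₂ y₂ = (Xmat d C n).mulVec m' := by
    rw [hmN']; exact sum_smul_col d C n m'
  -- uniqueness of the pattern decomposition
  have hsum : (Xmat d C n).mulVec (m + m') = (Xmat d C n).mulVec (patV l₀ r₀ n p₀ q₀ s₀) := by
    rw [Matrix.mulVec_add, ← hm, ← hm', ← sum_smul_col]
    have h3 := hpat₀ n (by omega)
    have h4 : wt n x₁ y₁ - β + (β - wt n x₂ y₂) = wt n x₁ y₁ - wt n x₂ y₂ := by abel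
    rw [h4, h3]
    rfl
  have hmm' : m + m' = patV l₀ r₀ n p₀ q₀ s₀ :=
    mulVec_inj d C n (detX_ne d C hd hX n (by omega)) _ _ hsum
  -- bounds on the pattern
  have hsum_ge : ∀ a : ℕ, a < L₀ → p₀ a + q₀ a ≤ ∑ i ∈ Finset.range L₀, (p₀ i + q₀ i) :=
    fun a ha => Finset.single_le_sum (f := fun i => p₀ i + q₀ i)
      (fun i _ => add_nonneg (hp₀ i) (hq₀ i)) (Finset.mem_range.mpr ha)
  have hsnn : (0 : ℤ) ≤ ∑ i ∈ Finset.range L₀, (p₀ i + q₀ i) :=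
    Finset.sum_nonneg fun i _ => add_nonneg (hp₀ i) (hq₀ i)
  have hpatB : ∀ (k : ℕ) (hk : k < n), 0 ≤ patV l₀ r₀ n p₀ q₀ s₀ ⟨k, hk⟩ ∧
      patV l₀ r₀ n p₀ q₀ s₀ ⟨k, hk⟩ ≤ B := by
    intro k hk
    rw [patV_mk]
    by_cases hc1 : k + 1 < l₀
    · rw [if_pos hc1]
      refine ⟨hp₀ _, ?_⟩
      have h5 := hsum_ge k (by omega)
      have h6 := hq₀ k
      rw [hBdef]; linarith
    · rw [if_neg hc1]
      by_cases hc2 : k ≤ n - r₀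
      · rw [if_pos hc2]
        exact ⟨hs₀, by rw [hBdef]; linarith⟩
      · rw [if_neg hc2]
        have hidx : n - 1 - k < L₀ := by omega
        refine ⟨hq₀ _, ?_⟩
        have h5 := hsum_ge (n - 1 - k) hidx
        have h6 := hp₀ (n - 1 - k)
        rw [hBdef]; linarith
  -- the coefficient functions, extended by zero
  set f : ℕ → ℤ := ext n m with hfdef
  set g : ℕ → ℤ := ext n m' with hgdef
  have hf0 : ∀ k, 0 ≤ f k := by
    intro k
    show (0 : ℤ) ≤ ext n m k
    rw [ext]
    split
    · exact hm0 _
    · exact le_refl 0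
  have hg0 : ∀ k, 0 ≤ g k := by
    intro k
    show (0 : ℤ) ≤ ext n m' k
    rw [ext]
    split
    · exact hm'0 _
    · exact le_refl 0
  have hfg : ∀ (k : ℕ) (hk : k < n), f k + g k = patV l₀ r₀ n p₀ q₀ s₀ ⟨k, hk⟩ := by
    intro k hk
    have h3 := congrFun hmm' ⟨k, hk⟩
    rw [Pi.add_apply] at h3
    show ext n m k + ext n m' k = _
    rw [ext_lt n m k hk, ext_lt n m' k hk]
    exact h3
  have hfB : ∀ k, f k ≤ B := by
    intro k
    rcases Nat.lt_or_ge k n with hk | hk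
    · have h3 := hfg k hk
      have h4 := (hpatB k hk).2
      have h5 := hg0 k
      linarith
    · show ext n m k ≤ B
      rw [ext_ge n m k hk]
      exact hBnn
  -- entry formula for β in the tridiagonal region
  have hβk : ∀ (k : ℕ) (hk : k < n), d ≤ k →
      β ⟨k, hk⟩ = x₁ k + y₁ (n - 1 - k) - (2 * f k - f (k - 1) - f (k + 1)) := by
    intro k hk hkd
    have h3 := congrFun hm ⟨k, hk⟩
    rw [Pi.sub_apply, wt_apply, mulVec_hi d C n hd m ⟨k, hk⟩ hkd] at h3
    simp only [Fin.val_mk] at h3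
    rw [hfdef]
    linarith
  -- convexity in the middle
  have hconv : ∀ k, L₀ < k → k < n - 1 - L₀ → 2 * f k ≤ f (k - 1) + f (k + 1) := by
    intro k hk1 hk2
    have hkn : k < n := by omega
    have h3 := hβk k hkn (by omega)
    have h4 := hβ0 ⟨k, hkn⟩
    have h5 := (hL₀ k (by omega)).1
    have h6 := (hL₀ (n - 1 - k) (by omega)).2.1
    rw [h5, h6] at h3
    linarith
  -- plateau
  have hplat0 := plateau_const f L₀ (n - 1 - L₀) B.toNat
    (fun k hk1 hk2 => ⟨hf0 k, by
      have := hfB k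
      omega⟩) hconv
  set t : ℤ := f (L₀ + B.toNat) with htdef
  have hplat : ∀ k, E - 1 ≤ k → k ≤ n - E → f k = t := by
    intro k hk1 hk2
    exact hplat0 k (by omega) (by omega)
  have ht0 : 0 ≤ t := hf0 _
  -- conclusion (b): middle vanishing
  have hmid : ∀ k : Fin n, E ≤ (k : ℕ) → (k : ℕ) + E < n → β k = 0 := by
    intro k hk1 hk2
    have h3 := hβk (k : ℕ) k.isLt (by omega)
    have h5 := (hL₀ (k : ℕ) (by omega)).1
    have h6 := (hL₀ (n - 1 - (k : ℕ)) (by omega)).2.1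
    have hp1 := hplat ((k : ℕ) - 1) (by omega) (by omega)
    have hp2 := hplat (k : ℕ) (by omega) (by omega)
    have hp3 := hplat ((k : ℕ) + 1) (by omega) (by omega)
    rw [h5, h6, hp1, hp2, hp3] at h3
    have h7 : β ⟨(k : ℕ), k.isLt⟩ = β k := congrArg β (Fin.eta k k.isLt)
    rw [h7] at h3
    rw [h3]
    ring
  -- conclusion (a): value bound
  have hWnn : 2 ≤ W := by
    rw [hWdef]
    have : (0 : ℤ) ≤ ∑ j ∈ Finset.range d, ∑ i ∈ Finset.range d, |ent d C j i| :=
      Finset.sum_nonneg fun j _ => Finset.sum_nonneg fun i _ => abs_nonneg _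
    linarith
  have hval : ∀ k : Fin n, β k ≤ V := by
    intro k
    have hwtb : x₁ (k : ℕ) + y₁ (n - 1 - (k : ℕ)) ≤ ∑ i ∈ Finset.range L₀, (x₁ i + y₁ i) := by
      have hsplit : ∑ i ∈ Finset.range L₀, (x₁ i + y₁ i) =
          (∑ i ∈ Finset.range L₀, x₁ i) + ∑ i ∈ Finset.range L₀, y₁ i :=
        Finset.sum_add_distrib
      have hx : x₁ (k : ℕ) ≤ ∑ i ∈ Finset.range L₀, x₁ i := by
        rcases Nat.lt_or_ge (k : ℕ) L₀ with h | h
        · exact Finset.single_le_sum (fun i _ => hx₁0 i) (Finset.mem_range.mpr h)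
        · rw [(hL₀ _ h).1]
          exact Finset.sum_nonneg fun i _ => hx₁0 i
      have hy : y₁ (n - 1 - (k : ℕ)) ≤ ∑ i ∈ Finset.range L₀, y₁ i := by
        rcases Nat.lt_or_ge (n - 1 - (k : ℕ)) L₀ with h | h
        · exact Finset.single_le_sum (fun i _ => hy₁0 i) (Finset.mem_range.mpr h)
        · rw [(hL₀ _ h).2.1]
          exact Finset.sum_nonneg fun i _ => hy₁0 i
      linarith
    have hmv : -(B * W) ≤ (Xmat d C n).mulVec m k := by
      rcases Nat.lt_or_ge (k : ℕ) d with hkd | hkd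
      · rw [mulVec_lo d C n (by omega) m k hkd]
        have hterm : ∀ i ∈ Finset.range d,
            -(|ent d C (k : ℕ) i| * B) ≤ ent d C (k : ℕ) i * ext n m i := by
          intro i _
          have hfi0 : 0 ≤ ext n m i := hf0 i
          have hfiB : ext n m i ≤ B := hfB i
          rcases le_or_gt 0 (ent d C (k : ℕ) i) with he | he
          · have h7 : 0 ≤ ent d C (k : ℕ) i * ext n m i := mul_nonneg he hfi0
            have h8 : 0 ≤ |ent d C (k : ℕ) i| * B := mul_nonneg (abs_nonneg _) hBnn
            linarith
          · have h7 : ent d C (k : ℕ) i * B ≤ ent d C (k : ℕ) i * ext n m i :=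
              mul_le_mul_of_nonpos_left hfiB (le_of_lt he)
            rw [abs_of_neg he]
            linarith
        have hsum2 : -(∑ i ∈ Finset.range d, |ent d C (k : ℕ) i| * B) ≤
            ∑ i ∈ Finset.range d, ent d C (k : ℕ) i * ext n m i := by
          rw [← Finset.sum_neg_distrib]
          exact Finset.sum_le_sum hterm
        have hrow : ∑ i ∈ Finset.range d, |ent d C (k : ℕ) i| ≤ W - 2 := by
          rw [hWdef]
          have := Finset.single_le_sum
            (f := fun j => ∑ i ∈ Finset.range d, |ent d C j i|)
            (fun j _ => Finset.sum_nonneg fun i _ => abs_nonneg _)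
            (Finset.mem_range.mpr (show (k : ℕ) < d from hkd))
          linarith
        have hite : -B ≤ (if (k : ℕ) + 1 = d then -(ext n m d) else 0) := by
          split
          · have := hfB d
            linarith
          · linarith
        have hfac : ∑ i ∈ Finset.range d, |ent d C (k : ℕ) i| * B ≤ (W - 2) * B := by
          rw [← Finset.sum_mul]
          exact mul_le_mul_of_nonneg_right hrow hBnn
        nlinarith
      · rw [mulVec_hi d C n hd m k hkd]
        have h7 : ext n m (k : ℕ) ≤ B := hfB (k : ℕ)
        have h8 : (0 : ℤ) ≤ ext n m ((k : ℕ) - 1) := hf0 ((k : ℕ) - 1)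
        have h9 : (0 : ℤ) ≤ ext n m ((k : ℕ) + 1) := hf0 ((k : ℕ) + 1)
        have h12 : (0 : ℤ) ≤ ext n m (k : ℕ) := hf0 (k : ℕ)
        have h13 : ext n m ((k : ℕ) - 1) ≤ B := hfB _
        have h14 : ext n m ((k : ℕ) + 1) ≤ B := hfB _
        nlinarith
    have h3 := congrFun hm k
    rw [Pi.sub_apply, wt_apply] at h3
    rw [hVdef]
    linarith
  refine ⟨hval, hmid, ?_⟩
  -- the limit pair γ
  set γ₁ : ℕ → ℤ := fun k => if k < E then ext n β k else 0 with hγ₁def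
  set γ₂ : ℕ → ℤ := fun j => if j < E then ext n β (n - 1 - j) else 0 with hγ₂def
  have hβe0 : ∀ i, 0 ≤ ext n β i := by
    intro i
    rw [ext]
    split
    · exact hβ0 _
    · exact le_refl 0
  have hγ₁0 : ∀ i, 0 ≤ γ₁ i := by
    intro i
    show (0 : ℤ) ≤ if i < E then ext n β i else 0
    split
    · exact hβe0 _
    · exact le_refl 0
  have hγ₂0 : ∀ i, 0 ≤ γ₂ i := by
    intro i
    show (0 : ℤ) ≤ if i < E then ext n β (n - 1 - i) else 0
    split
    · exact hβe0 _
    · exact le_refl 0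
  have hγ₁z : ∀ i, E ≤ i → γ₁ i = 0 := by
    intro i hi
    show (if i < E then ext n β i else 0) = 0
    rw [if_neg (by omega)]
  have hγ₂z : ∀ i, E ≤ i → γ₂ i = 0 := by
    intro i hi
    show (if i < E then ext n β (n - 1 - i) else 0) = 0
    rw [if_neg (by omega)]
  have hγ₁val : ∀ i, i < E → γ₁ i = ext n β i := by
    intro i hi
    show (if i < E then ext n β i else 0) = ext n β i
    rw [if_pos hi]
  have hγ₂val : ∀ i, i < E → γ₂ i = ext n β (n - 1 - i) := by
    intro i hi
    show (if i < E then ext n β (n - 1 - i) else 0) = ext n β (n - 1 - i)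
    rw [if_pos hi]
  have hwtγ : wt n γ₁ γ₂ = β := by
    funext k
    rw [wt_apply]
    rcases Nat.lt_or_ge (k : ℕ) E with hk1 | hk1
    · rw [hγ₁val _ hk1, hγ₂z (n - 1 - (k : ℕ)) (by omega), ext_fin n β k, add_zero]
    · rcases Nat.lt_or_ge ((k : ℕ) + E) n with hk2 | hk2
      · rw [hγ₁z _ hk1, hγ₂z (n - 1 - (k : ℕ)) (by omega), hmid k hk1 hk2, add_zero]
      · have hkn := k.isLt
        rw [hγ₁z _ hk1, hγ₂val (n - 1 - (k : ℕ)) (by omega), zero_add]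
        have he : n - 1 - (n - 1 - (k : ℕ)) = (k : ℕ) := by omega
        rw [he, ext_fin n β k]
  -- first stable inequality : λ₁ ≥ γ
  have hsge1 : StableGE d C x₁ y₁ γ₁ γ₂ := by
    have hmpat : patV (E + 1) (E + 1) n f (fun j => f (n - 1 - j)) t = m := by
      funext mm
      have hmm := mm.isLt
      have h3 : patV (E + 1) (E + 1) n f (fun j => f (n - 1 - j)) t ⟨(mm : ℕ), hmm⟩ =
          patV (E + 1) (E + 1) n f (fun j => f (n - 1 - j)) t mm :=
        congrArg _ (Fin.eta mm hmm)
      rw [← h3, patV_mk]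
      by_cases hc1 : (mm : ℕ) + 1 < E + 1
      · rw [if_pos hc1]
        show ext n m (mm : ℕ) = m mm
        exact ext_fin n m mm
      · rw [if_neg hc1]
        by_cases hc2 : (mm : ℕ) ≤ n - (E + 1)
        · rw [if_pos hc2]
          have h4 := hplat (mm : ℕ) (by omega) (by omega)
          rw [← h4]
          exact ext_fin n m mm
        · rw [if_neg hc2]
          have he : n - 1 - (n - 1 - (mm : ℕ)) = (mm : ℕ) := by omega
          show f (n - 1 - (n - 1 - (mm : ℕ))) = m mm
          rw [he]
          exact ext_fin n m mm
    have hid : wt n x₁ y₁ - wt n γ₁ γ₂ =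
        (Xmat d C n).mulVec (patV (E + 1) (E + 1) n f (fun j => f (n - 1 - j)) t) := by
      rw [hwtγ, hmpat]
      exact hm
    have htr := transport d C hd (E + 1) (E + 1) f (fun j => f (n - 1 - j)) t x₁ y₁ γ₁ γ₂ E
      (fun i hi => (hL₀ i (by omega)).1) (fun i hi => (hL₀ i (by omega)).2.1)
      hγ₁z hγ₂z (by omega) (by omega) (by omega) n (by omega) hid
    exact ⟨E + 1, E + 1, f, fun j => f (n - 1 - j), t, fun i => hf0 i, fun j => hf0 _, ht0,
      fun n' hn' => by rw [sum_smul_col]; exact htr n' hn'⟩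
  -- second stable inequality : γ ≥ λ₂
  have hgplat : ∀ k, E - 1 ≤ k → k ≤ n - E → g k = s₀ - t := by
    intro k hk1 hk2
    have hkn : k < n := by omega
    have h3 := hfg k hkn
    have h4 : patV l₀ r₀ n p₀ q₀ s₀ ⟨k, hkn⟩ = s₀ := by
      rw [patV_mk, if_neg (by omega), if_pos (by omega)]
    have h5 := hplat k hk1 hk2
    rw [h4, h5] at h3
    linarith
  have hst0 : 0 ≤ s₀ - t := by
    have h3 := hgplat (E - 1) (le_refl _) (by omega)
    rw [← h3]
    exact hg0 _
  have hsge2 : StableGE d C γ₁ γ₂ x₂ y₂ := by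
    have hmpat : patV (E + 1) (E + 1) n g (fun j => g (n - 1 - j)) (s₀ - t) = m' := by
      funext mm
      have hmm := mm.isLt
      have h3 : patV (E + 1) (E + 1) n g (fun j => g (n - 1 - j)) (s₀ - t) ⟨(mm : ℕ), hmm⟩ =
          patV (E + 1) (E + 1) n g (fun j => g (n - 1 - j)) (s₀ - t) mm :=
        congrArg _ (Fin.eta mm hmm)
      rw [← h3, patV_mk]
      by_cases hc1 : (mm : ℕ) + 1 < E + 1
      · rw [if_pos hc1]
        show ext n m' (mm : ℕ) = m' mm
        exact ext_fin n m' mm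
      · rw [if_neg hc1]
        by_cases hc2 : (mm : ℕ) ≤ n - (E + 1)
        · rw [if_pos hc2]
          have h4 := hgplat (mm : ℕ) (by omega) (by omega)
          rw [← h4]
          exact ext_fin n m' mm
        · rw [if_neg hc2]
          have he : n - 1 - (n - 1 - (mm : ℕ)) = (mm : ℕ) := by omega
          show g (n - 1 - (n - 1 - (mm : ℕ))) = m' mm
          rw [he]
          exact ext_fin n m' mm
    have hid : wt n γ₁ γ₂ - wt n x₂ y₂ =
        (Xmat d C n).mulVec (patV (E + 1) (E + 1) n g (fun j => g (n - 1 - j)) (s₀ - t)) := by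
      rw [hwtγ, hmpat]
      exact hm'
    have htr := transport d C hd (E + 1) (E + 1) g (fun j => g (n - 1 - j)) (s₀ - t) γ₁ γ₂ x₂ y₂ E
      hγ₁z hγ₂z
      (fun i hi => (hL₀ i (by omega)).2.2.1) (fun i hi => (hL₀ i (by omega)).2.2.2)
      (by omega) (by omega) (by omega) n (by omega) hid
    exact ⟨E + 1, E + 1, g, fun j => g (n - 1 - j), s₀ - t, fun i => hg0 i, fun j => hg0 _, hst0,
      fun n' hn' => by rw [sum_smul_col]; exact htr n' hn'⟩
  exact ⟨γ₁, γ₂, hγ₁0, hγ₂0, ⟨E, hγ₁z⟩, ⟨E, hγ₂z⟩, hsge1, hsge2, hwtγ⟩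

end TSIAux

namespace TSIAux

lemma pat_mem_Qpos (d : ℕ) (C : Matrix (Fin d) (Fin d) ℤ) (n l r : ℕ) (p q : ℕ → ℤ) (s : ℤ)
    (hp : ∀ i, 0 ≤ p i) (hq : ∀ j, 0 ≤ q j) (hs : 0 ≤ s) (v : Fin n → ℤ)
    (hv : v = ∑ mm : Fin n, coeffPat l r n p q s mm • col d C n mm) : v ∈ Qpos d C n := by
  refine ⟨fun i => (coeffPat l r n p q s i).toNat, ?_⟩
  rw [hv]
  refine Finset.sum_congr rfl fun i _ => ?_
  congr 1
  have h0 : 0 ≤ coeffPat l r n p q s i := by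
    rw [coeffPat]
    split
    · exact hp _
    split
    · exact hs
    · exact hq _
  rw [Int.toNat_of_nonneg h0]

end TSIAux


open TSIAux

/-- Interval stabilization: for `λ₁ ≥ λ₂` in `H₂⁺` (stable dominance order),
the stable interval `I(λ₁,λ₂) = {γ ∈ H₂⁺ : λ₁ ≥ γ ≥ λ₂}` is finite, and for
all sufficiently large `n` the finite-`n` interval
`I^{(n)}(λ₁,λ₂) = {β ∈ P⁺(X_n) : λ₁^{(n)} ≥ β ≥ λ₂^{(n)}}` (dominant weights
`β` with both differences in `Q⁺(X_n)`) is exactly the image of `I(λ₁,λ₂)`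
under `γ ↦ γ^{(n)}`. -/
theorem tensor_stab_interval_stabilization (d : ℕ) (hd : 1 ≤ d)
    (C : Matrix (Fin d) (Fin d) ℤ) (hX : Extensible d C)
    (x₁ y₁ x₂ y₂ : ℕ → ℤ)
    (hx₁ : FinSuppSeq x₁) (hy₁ : FinSuppSeq y₁)
    (hx₂ : FinSuppSeq x₂) (hy₂ : FinSuppSeq y₂)
    (hx₁0 : ∀ i, 0 ≤ x₁ i) (hy₁0 : ∀ i, 0 ≤ y₁ i)
    (hx₂0 : ∀ i, 0 ≤ x₂ i) (hy₂0 : ∀ i, 0 ≤ y₂ i)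
    (h12 : StableGE d C x₁ y₁ x₂ y₂) :
    ∃ S : Set ((ℕ → ℤ) × (ℕ → ℤ)),
      S = {γ | (∀ i, 0 ≤ γ.1 i) ∧ (∀ j, 0 ≤ γ.2 j) ∧
              FinSuppSeq γ.1 ∧ FinSuppSeq γ.2 ∧
              StableGE d C x₁ y₁ γ.1 γ.2 ∧ StableGE d C γ.1 γ.2 x₂ y₂} ∧
      S.Finite ∧
      ∃ N : ℕ, ∀ n, N ≤ n →
        {β : Fin n → ℤ | (∀ i, 0 ≤ β i) ∧
            wt n x₁ y₁ - β ∈ Qpos d C n ∧ β - wt n x₂ y₂ ∈ Qpos d C n}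
          = (fun γ : (ℕ → ℤ) × (ℕ → ℤ) => wt n γ.1 γ.2) '' S := by
  classical
  obtain ⟨l₀, r₀, p₀, q₀, s₀, hp₀, hq₀, hs₀, hpat₀⟩ := h12
  obtain ⟨L₁, hL₁⟩ := hx₁
  obtain ⟨L₂, hL₂⟩ := hy₁
  obtain ⟨L₃, hL₃⟩ := hx₂
  obtain ⟨L₄, hL₄⟩ := hy₂
  set L₀ : ℕ := L₁ + L₂ + L₃ + L₄ + l₀ + r₀ + d + 1 with hL₀def
  have hL₀ : ∀ i, L₀ ≤ i → x₁ i = 0 ∧ y₁ i = 0 ∧ x₂ i = 0 ∧ y₂ i = 0 := fun i hi =>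
    ⟨hL₁ i (by omega), hL₂ i (by omega), hL₃ i (by omega), hL₄ i (by omega)⟩
  set B : ℤ := s₀ + ∑ i ∈ Finset.range L₀, (p₀ i + q₀ i) with hBdef
  set E : ℕ := L₀ + B.toNat + 1 with hEdef
  set W : ℤ := 2 + ∑ j ∈ Finset.range d, ∑ i ∈ Finset.range d, |ent d C j i| with hWdef
  set V : ℤ := (∑ i ∈ Finset.range L₀, (x₁ i + y₁ i)) + B * W with hVdef
  set N₁ : ℕ := d + (detX d C d).natAbs + 1 + 4 * E + 8 with hN₁def
  have hV0 : 0 ≤ V := by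
    have h1 : (0 : ℤ) ≤ ∑ i ∈ Finset.range L₀, (x₁ i + y₁ i) :=
      Finset.sum_nonneg fun i _ => add_nonneg (hx₁0 i) (hy₁0 i)
    have h2 : (0 : ℤ) ≤ ∑ i ∈ Finset.range L₀, (p₀ i + q₀ i) :=
      Finset.sum_nonneg fun i _ => add_nonneg (hp₀ i) (hq₀ i)
    have h3 : (0 : ℤ) ≤ ∑ j ∈ Finset.range d, ∑ i ∈ Finset.range d, |ent d C j i| :=
      Finset.sum_nonneg fun j _ => Finset.sum_nonneg fun i _ => abs_nonneg _
    have h4 : 0 ≤ B := by rw [hBdef]; linarith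
    have h5 : 0 ≤ W := by rw [hWdef]; linarith
    rw [hVdef]
    nlinarith
  -- the key lemma, specialized
  have hkey : ∀ n : ℕ, N₁ ≤ n → ∀ β : Fin n → ℤ, (∀ i, 0 ≤ β i) →
      wt n x₁ y₁ - β ∈ Qpos d C n → β - wt n x₂ y₂ ∈ Qpos d C n →
      (∀ k : Fin n, β k ≤ V) ∧
      (∀ k : Fin n, E ≤ (k : ℕ) → (k : ℕ) + E < n → β k = 0) ∧
      ∃ γ₁ γ₂ : ℕ → ℤ, (∀ i, 0 ≤ γ₁ i) ∧ (∀ j, 0 ≤ γ₂ j) ∧ FinSuppSeq γ₁ ∧ FinSuppSeq γ₂ ∧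
        StableGE d C x₁ y₁ γ₁ γ₂ ∧ StableGE d C γ₁ γ₂ x₂ y₂ ∧ wt n γ₁ γ₂ = β := by
    intro n hn β hβ0 h1 h2
    exact key d C hd hX x₁ y₁ x₂ y₂ hx₁0 hy₁0 l₀ r₀ p₀ q₀ s₀ hp₀ hq₀ hs₀ hpat₀ L₀ hL₀
      (by omega) (by omega) (by omega) (by omega) B hBdef E hEdef W hWdef V hVdef n
      (by omega) (by omega) β hβ0 h1 h2
  set S : Set ((ℕ → ℤ) × (ℕ → ℤ)) :=
    {γ | (∀ i, 0 ≤ γ.1 i) ∧ (∀ j, 0 ≤ γ.2 j) ∧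
        FinSuppSeq γ.1 ∧ FinSuppSeq γ.2 ∧
        StableGE d C x₁ y₁ γ.1 γ.2 ∧ StableGE d C γ.1 γ.2 x₂ y₂} with hSdef
  -- a uniform bound for the stable witnesses of elements of S
  set wit : ((ℕ → ℤ) × (ℕ → ℤ)) → ℕ := fun γ =>
    if h : StableGE d C x₁ y₁ γ.1 γ.2 ∧ StableGE d C γ.1 γ.2 x₂ y₂ then
      (h.1.choose + h.1.choose_spec.choose) + (h.2.choose + h.2.choose_spec.choose)
    else 0 with hwitdef
  have hwit : ∀ γ : ((ℕ → ℤ) × (ℕ → ℤ)),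
      StableGE d C x₁ y₁ γ.1 γ.2 → StableGE d C γ.1 γ.2 x₂ y₂ →
      ∀ n, wit γ ≤ n →
        (wt n x₁ y₁ - wt n γ.1 γ.2 ∈ Qpos d C n ∧
         wt n γ.1 γ.2 - wt n x₂ y₂ ∈ Qpos d C n) := by
    intro γ hs1 hs2 n hn
    have hpair : StableGE d C x₁ y₁ γ.1 γ.2 ∧ StableGE d C γ.1 γ.2 x₂ y₂ := ⟨hs1, hs2⟩
    rw [hwitdef] at hn
    simp only [dif_pos hpair] at hn
    constructor
    · obtain ⟨p, q, s, hp, hq, hs, hid⟩ := hpair.1.choose_spec.choose_spec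
      exact pat_mem_Qpos d C n _ _ p q s hp hq hs _ (hid n (by omega))
    · obtain ⟨p, q, s, hp, hq, hs, hid⟩ := hpair.2.choose_spec.choose_spec
      exact pat_mem_Qpos d C n _ _ p q s hp hq hs _ (hid n (by omega))
  -- good levels for elements of S
  have hβgood : ∀ γ ∈ S, ∀ n : ℕ, N₁ + wit γ ≤ n →
      (∀ k : Fin n, wt n γ.1 γ.2 k ≤ V) ∧
      (∀ k : Fin n, E ≤ (k : ℕ) → (k : ℕ) + E < n → wt n γ.1 γ.2 k = 0) := by
    intro γ hγ n hn
    obtain ⟨hγ1, hγ2, -, -, hs1, hs2⟩ := hγ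
    have hq12 := hwit γ hs1 hs2 n (by omega)
    have hβ0 : ∀ i : Fin n, 0 ≤ wt n γ.1 γ.2 i := by
      intro i
      rw [wt_apply]
      exact add_nonneg (hγ1 _) (hγ2 _)
    obtain ⟨ha, hb, -⟩ := hkey n (by omega) (wt n γ.1 γ.2) hβ0 hq12.1 hq12.2
    exact ⟨ha, hb⟩
  -- membership in S forces vanishing beyond E
  have hSzero : ∀ γ ∈ S, ∀ k, E ≤ k → γ.1 k = 0 ∧ γ.2 k = 0 := by
    intro γ hγ k hk
    have hγ1 : ∀ i, 0 ≤ γ.1 i := hγ.1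
    have hγ2 : ∀ j, 0 ≤ γ.2 j := hγ.2.1
    set n : ℕ := N₁ + wit γ + k + E + 1 with hndef
    obtain ⟨-, hb⟩ := hβgood γ hγ n (by omega)
    have hkn : k < n := by omega
    have h3 := hb ⟨k, hkn⟩ (by exact hk) (by show k + E < n; omega)
    rw [wt_apply] at h3
    simp only [Fin.val_mk] at h3
    have h4 := hγ1 k
    have h5 := hγ2 (n - 1 - k)
    have hc1 : γ.1 k = 0 := by omega
    have hk2n : n - 1 - k < n := by omega
    have h6 := hb ⟨n - 1 - k, hk2n⟩ (by show E ≤ n - 1 - k; omega) (by show n - 1 - k + E < n; omega)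
    rw [wt_apply] at h6
    simp only [Fin.val_mk] at h6
    have he : n - 1 - (n - 1 - k) = k := by omega
    rw [he] at h6
    have h7 := hγ1 (n - 1 - k)
    have h8 := hγ2 k
    exact ⟨hc1, by omega⟩
  -- membership in S forces bounded values
  have hSval : ∀ γ ∈ S, ∀ k, γ.1 k ∈ Set.Icc 0 V ∧ γ.2 k ∈ Set.Icc 0 V := by
    intro γ hγ k
    have hγ1 : ∀ i, 0 ≤ γ.1 i := hγ.1
    have hγ2 : ∀ j, 0 ≤ γ.2 j := hγ.2.1
    rcases Nat.lt_or_ge k E with hk | hk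
    · set n : ℕ := N₁ + wit γ + k + E + 1 with hndef
      obtain ⟨ha, -⟩ := hβgood γ hγ n (by omega)
      have hkn : k < n := by omega
      have h3 := ha ⟨k, hkn⟩
      rw [wt_apply] at h3
      simp only [Fin.val_mk] at h3
      have hk2n : n - 1 - k < n := by omega
      have h6 := ha ⟨n - 1 - k, hk2n⟩
      rw [wt_apply] at h6
      simp only [Fin.val_mk] at h6
      have he : n - 1 - (n - 1 - k) = k := by omega
      rw [he] at h6
      have h4 := hγ1 k
      have h5 := hγ2 (n - 1 - k)
      have h7 := hγ1 (n - 1 - k)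
      have h8 := hγ2 k
      exact ⟨⟨h4, by omega⟩, ⟨h8, by omega⟩⟩
    · obtain ⟨hz1, hz2⟩ := hSzero γ hγ k hk
      rw [hz1, hz2]
      exact ⟨⟨le_refl 0, hV0⟩, ⟨le_refl 0, hV0⟩⟩
  -- finiteness of S
  have hSfin : S.Finite := by
    set Φ : ((ℕ → ℤ) × (ℕ → ℤ)) → ((Fin E → ℤ) × (Fin E → ℤ)) :=
      fun γ => (fun i => γ.1 (i : ℕ), fun i => γ.2 (i : ℕ)) with hΦdef
    have hIccF : (Set.Icc (0 : ℤ) V).Finite := Set.finite_Icc 0 V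
    have hpiF : {h : Fin E → ℤ | ∀ i, h i ∈ Set.Icc (0 : ℤ) V}.Finite := by
      refine (Set.Finite.pi fun _ : Fin E => hIccF).subset ?_
      intro h hh
      rw [Set.mem_pi]
      exact fun i _ => hh i
    have hTF : {h : (Fin E → ℤ) × (Fin E → ℤ) |
        (∀ i, h.1 i ∈ Set.Icc (0 : ℤ) V) ∧ (∀ i, h.2 i ∈ Set.Icc (0 : ℤ) V)}.Finite := by
      refine (hpiF.prod hpiF).subset ?_
      intro h hh
      rw [Set.mem_prod]
      exact ⟨hh.1, hh.2⟩
    have himage : (Φ '' S).Finite := by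
      refine hTF.subset ?_
      rintro - ⟨γ, hγ, rfl⟩
      exact ⟨fun i => (hSval γ hγ (i : ℕ)).1, fun i => (hSval γ hγ (i : ℕ)).2⟩
    refine Set.Finite.of_finite_image himage ?_
    intro γ hγ γ' hγ' hΦeq
    have h1 : (fun i : Fin E => γ.1 (i : ℕ)) = (fun i : Fin E => γ'.1 (i : ℕ)) :=
      congrArg Prod.fst hΦeq
    have h2 : (fun i : Fin E => γ.2 (i : ℕ)) = (fun i : Fin E => γ'.2 (i : ℕ)) :=
      congrArg Prod.snd hΦeq
    have hfst : γ.1 = γ'.1 := by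
      funext k
      rcases Nat.lt_or_ge k E with hk | hk
      · exact congrFun h1 ⟨k, hk⟩
      · rw [(hSzero γ hγ k hk).1, (hSzero γ' hγ' k hk).1]
    have hsnd : γ.2 = γ'.2 := by
      funext k
      rcases Nat.lt_or_ge k E with hk | hk
      · exact congrFun h2 ⟨k, hk⟩
      · rw [(hSzero γ hγ k hk).2, (hSzero γ' hγ' k hk).2]
    exact Prod.ext hfst hsnd
  -- a uniform level bound over S
  obtain ⟨N₂, hN₂⟩ : ∃ N₂ : ℕ, ∀ γ ∈ S, wit γ ≤ N₂ := by
    have himfin : (wit '' S).Finite := hSfin.image wit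
    obtain ⟨N₂, hub⟩ := himfin.bddAbove
    exact ⟨N₂, fun γ hγ => hub (Set.mem_image_of_mem wit hγ)⟩
  refine ⟨S, hSdef, hSfin, N₁ + N₂, ?_⟩
  intro n hn
  apply Set.ext
  intro β
  constructor
  · rintro ⟨hβ0, h1, h2⟩
    obtain ⟨-, -, γ₁, γ₂, hγ₁0, hγ₂0, hfs1, hfs2, hsge1, hsge2, hwtγ⟩ :=
      hkey n (by omega) β hβ0 h1 h2
    exact ⟨(γ₁, γ₂), ⟨hγ₁0, hγ₂0, hfs1, hfs2, hsge1, hsge2⟩, hwtγ⟩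
  · rintro ⟨γ, hγ, rfl⟩
    have hγ1 : ∀ i, 0 ≤ γ.1 i := hγ.1
    have hγ2 : ∀ j, 0 ≤ γ.2 j := hγ.2.1
    have hs1 : StableGE d C x₁ y₁ γ.1 γ.2 := hγ.2.2.2.2.1
    have hs2 : StableGE d C γ.1 γ.2 x₂ y₂ := hγ.2.2.2.2.2
    have hq12 := hwit γ hs1 hs2 n (by
      have := hN₂ γ hγ
      omega)
    refine ⟨?_, hq12.1, hq12.2⟩
    intro i
    show 0 ≤ wt n γ.1 γ.2 i
    rw [wt_apply]
    exact add_nonneg (hγ1 _) (hγ2 _)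
end

section
/- Combinatorial core of interval stabilization: let s ≥ 0 and let b_l, b_{l+1}, …, b_{n−r+1} be integers with 0 ≤ b_i ≤ s for all i and 2b_i − b_{i−1} − b_{i+1} ≥ 0 for all l < i < n−r+1 (i.e., the sequence is concave). If n ≥ l + r + 2s, then b_i is constant on the index range l+s ≤ i ≤ n−r+1−s. -/
open scoped BigOperators

/-- Combinatorial core of interval stabilization: a concave integer sequence
`b_l, …, b_{n-r+1}` with values in `[0, s]`, where `n ≥ l + r + 2s`, is
constant on the middle range `l+s ≤ i ≤ n-r+1-s`. -/
theorem tensor_stab_concave_constant (l r n s : ℕ) (b : ℕ → ℤ)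
    (hn : l + r + 2 * s ≤ n)
    (hb : ∀ i, l ≤ i → i ≤ n - r + 1 → 0 ≤ b i ∧ b i ≤ (s : ℤ))
    (hconc : ∀ i, l < i → i < n - r + 1 → b (i - 1) + b (i + 1) ≤ 2 * b i) :
    ∀ i j, l + s ≤ i → i ≤ n - r + 1 - s → l + s ≤ j → j ≤ n - r + 1 - s →
      b i = b j := by
  set N := n - r + 1 with hNdef
  have hNge : l + 2 * s + 1 ≤ N := by omega
  -- differences are nonincreasing
  have hd : ∀ j k, l ≤ j → j ≤ k → k + 1 ≤ N → b (k + 1) - b k ≤ b (j + 1) - b j := by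
    intro j k hj hjk hk
    induction k with
    | zero =>
      have : j = 0 := Nat.le_zero.mp hjk
      subst this; exact le_refl _
    | succ k ih =>
      rcases Nat.lt_or_ge j (k + 1) with h | h
      · have hjk' : j ≤ k := Nat.lt_succ_iff.mp h
        have h1 : b (k + 1 - 1) + b (k + 1 + 1) ≤ 2 * b (k + 1) :=
          hconc (k + 1) (by omega) (by omega)
        simp only [Nat.add_sub_cancel] at h1
        have h2 := ih hjk' (by omega)
        linarith [h1, h2]
      · have : j = k + 1 := by omega
        subst this; exact le_refl _
  -- upward telescoping: if the difference at k is ≥ 1, the sequence rose a lot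
  have hup : ∀ k, l ≤ k → k + 1 ≤ N → 1 ≤ b (k + 1) - b k →
      ((k : ℤ) + 1 - l) ≤ b (k + 1) - b l := by
    intro k hk hkN hpos
    have key : ∀ m, l + m ≤ k + 1 → (m : ℤ) ≤ b (l + m) - b l := by
      intro m
      induction m with
      | zero => intro _; simp
      | succ m ih =>
        intro hm
        have hm' : l + m ≤ k := by omega
        have hstep : 1 ≤ b (l + m + 1) - b (l + m) := by
          have := hd (l + m) k (by omega) hm' hkN
          linarith
        have := ih (by omega)
        push_cast
        have : b (l + (m + 1)) = b (l + m + 1) := by ring_nf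
        rw [this]
        push_cast at *
        linarith
    have := key (k + 1 - l) (by omega)
    have heq : l + (k + 1 - l) = k + 1 := by omega
    rw [heq] at this
    have hcast : ((k + 1 - l : ℕ) : ℤ) = (k : ℤ) + 1 - l := by
      have : l ≤ k + 1 := by omega
      push_cast [Nat.cast_sub this]
      ring
    linarith [this, hcast.symm ▸ this]
  -- downward telescoping: if the difference at k is ≤ -1, it keeps falling
  have hdown : ∀ k, l ≤ k → k + 1 ≤ N → b (k + 1) - b k ≤ -1 →
      b N ≤ b (k + 1) - ((N : ℤ) - (k + 1)) := by
    intro k hk hkN hneg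
    have key : ∀ m, k + 1 + m ≤ N → b (k + 1 + m) ≤ b (k + 1) - m := by
      intro m
      induction m with
      | zero => intro _; simp
      | succ m ih =>
        intro hm
        have hstep : b (k + 1 + m + 1) - b (k + 1 + m) ≤ -1 := by
          have := hd k (k + 1 + m) hk (by omega) (by omega)
          linarith
        have := ih (by omega)
        have heq : k + 1 + (m + 1) = k + 1 + m + 1 := by ring
        rw [heq]
        push_cast
        linarith
    have := key (N - (k + 1)) (by omega)
    have heq : k + 1 + (N - (k + 1)) = N := by omega
    rw [heq] at this
    have hcast : ((N - (k + 1) : ℕ) : ℤ) = (N : ℤ) - (k + 1) := by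
      push_cast [Nat.cast_sub hkN]
      ring
    linarith [hcast ▸ this]
  -- flatness in the middle
  have hflat : ∀ k, l + s ≤ k → k + 1 ≤ N - s → b (k + 1) = b k := by
    intro k hk hkN
    have hkN' : k + 1 ≤ N := by omega
    have hbl := hb l le_rfl (by omega)
    have hbk1 := hb (k + 1) (by omega) hkN'
    have hbk := hb k (by omega) (by omega)
    have hbN := hb N (by omega) le_rfl
    by_contra hne
    rcases lt_or_gt_of_ne (sub_ne_zero.mpr hne) with h | h
    · -- b(k+1) - b k ≤ -1
      have h1 : b (k + 1) - b k ≤ -1 := by omega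
      have := hdown k (by omega) hkN' h1
      have hs : (s : ℤ) + 1 ≤ (N : ℤ) - (k + 1) := by
        have : k + 1 + s + 1 ≤ N := by omega
        push_cast
        omega
      linarith [hbk1.2, hbN.1]
    · have h1 : 1 ≤ b (k + 1) - b k := by omega
      have := hup k (by omega) hkN' h1
      have hs : (s : ℤ) + 1 ≤ (k : ℤ) + 1 - l := by
        have : l + s + 1 ≤ k + 1 := by omega
        omega
      linarith [hbk1.2, hbl.1]
  -- constancy from l+s
  have hconst : ∀ m, l + s + m ≤ N - s → b (l + s + m) = b (l + s) := by
    intro m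
    induction m with
    | zero => intro _; rfl
    | succ m ih =>
      intro hm
      have h1 : b (l + s + m + 1) = b (l + s + m) := hflat (l + s + m) (by omega) (by omega)
      have heq : l + s + (m + 1) = l + s + m + 1 := by ring
      rw [heq, h1, ih (by omega)]
  intro i j hi hi' hj hj'
  have hiN : i ≤ N - s := hi'
  have hjN : j ≤ N - s := hj'
  have h1 : b i = b (l + s) := by
    have : i = l + s + (i - (l + s)) := by omega
    rw [this]; exact hconst _ (by omega)
  have h2 : b j = b (l + s) := by
    have : j = l + s + (j - (l + s)) := by omega
    rw [this]; exact hconst _ (by omega)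
  rw [h1, h2]
end
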